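/- arXiv:2408.06846 — 2 statements merged into one kernel-verified Lean document; each statement's English description precedes it below -/
import Mathlib

section
/- Fix δ, η with 0 < η ≪ δ ≪ 1 and a smooth nonnegative ν supported on [1,2] with ∫ν = 1. Let B ≥ 1, let Y₁, Y₂ ∈ [B^{1−δ}, B^{1−δ+η}], Z₁, Z₂ ∈ [B^{δ+η}, B^{δ+2η}], set X_i := B²/(Y_iZ_i), and let z ∈ ℤ with B^{δ+η} ≤ |z| ≤ 2B^{δ+2η}. Then for every ε > 0, ∑_{x₁,y₁,x₂,y₂ ∈ ℤ, M(x₁,y₁,z)=M(x₂,y₂,z)} ∏_{i=1,2} ν(y_i/Y_i)ν(x_i/X_i) − ∑_{x,y ∈ ℤ} ∏_{i=1,2} ν(y/Y_i)ν(x/X_i) ≪_{ε,ν,δ,η} B^ε·Y₁Y₂. -/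
open scoped Classical

/-- The Markoff polynomial `M(x,y,z) = x² + y² + z² - xyz` (over ℤ). -/
def Mk (x y z : ℤ) : ℤ := x ^ 2 + y ^ 2 + z ^ 2 - x * y * z


lemma divisor_bound (ε : ℝ) (hε : 0 < ε) :
    ∃ C : ℝ, 1 ≤ C ∧ ∀ n : ℕ, n ≠ 0 → (n.divisors.card : ℝ) ≤ C * (n : ℝ) ^ ε := by
  set K : ℝ := max 1 (1 / (ε * Real.log 2)) with hK
  have hlog2 : (0:ℝ) < Real.log 2 := Real.log_pos (by norm_num)
  have hK1 : (1:ℝ) ≤ K := le_max_left _ _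
  have hKe : 1 ≤ K * (ε * Real.log 2) := by
    have h2 : 1 / (ε * Real.log 2) ≤ K := le_max_right _ _
    have hpos : 0 < ε * Real.log 2 := by positivity
    calc (1:ℝ) = (1 / (ε * Real.log 2)) * (ε * Real.log 2) := by field_simp
    _ ≤ K * (ε * Real.log 2) := by gcongr
  set P : ℕ := ⌈(2:ℝ) ^ (1/ε)⌉₊ with hP
  refine ⟨K ^ P, one_le_pow₀ hK1, ?_⟩
  intro n hn
  -- per prime factor bound
  have key : ∀ p ∈ n.primeFactors,
      ((n.factorization p + 1 : ℕ) : ℝ) ≤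
        (if (p:ℝ) ≤ (2:ℝ) ^ (1/ε) then K else 1) * ((p : ℝ) ^ (n.factorization p : ℕ)) ^ ε := by
    intro p hp
    have hpp : p.Prime := Nat.prime_of_mem_primeFactors hp
    have hp2 : (2:ℝ) ≤ (p:ℝ) := by exact_mod_cast hpp.two_le
    set a : ℕ := n.factorization p
    have hppos : (0:ℝ) < (p:ℝ) := by linarith
    have hrw : ((p : ℝ) ^ (a : ℕ)) ^ ε = (p:ℝ) ^ ((a:ℝ) * ε) := by
      rw [← Real.rpow_natCast (p:ℝ) a, ← Real.rpow_mul hppos.le]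
    rw [hrw]
    split_ifs with hcase
    · -- small prime: (a+1) ≤ K * p^(aε)
      have h1 : (2:ℝ) ^ ((a:ℝ) * ε) ≤ (p:ℝ) ^ ((a:ℝ) * ε) :=
        Real.rpow_le_rpow (by norm_num) hp2 (by positivity)
      have h2 : 1 + (a:ℝ) * ε * Real.log 2 ≤ (2:ℝ) ^ ((a:ℝ) * ε) := by
        rw [Real.rpow_def_of_pos (by norm_num)]
        calc 1 + (a:ℝ) * ε * Real.log 2 = (Real.log 2 * ((a:ℝ) * ε)) + 1 := by ring
        _ ≤ Real.exp (Real.log 2 * ((a:ℝ) * ε)) := Real.add_one_le_exp _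
      have ha0 : (0:ℝ) ≤ (a:ℝ) := Nat.cast_nonneg a
      have : ((a:ℝ) + 1) ≤ K * (1 + (a:ℝ) * ε * Real.log 2) := by nlinarith
      push_cast
      calc ((a:ℝ) + 1) ≤ K * (1 + (a:ℝ) * ε * Real.log 2) := this
      _ ≤ K * (2:ℝ) ^ ((a:ℝ) * ε) := by nlinarith [h2, (by linarith : (0:ℝ) < K)]
      _ ≤ K * (p:ℝ) ^ ((a:ℝ) * ε) := by nlinarith [h1, (by linarith : (0:ℝ) < K)]
    · -- large prime: (a+1) ≤ p^(aε)
      push_neg at hcase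
      have h2 : (2:ℝ) ≤ (p:ℝ) ^ ε := by
        have := Real.rpow_le_rpow (by positivity) hcase.le hε.le
        rwa [← Real.rpow_mul (by norm_num : (0:ℝ) ≤ 2), one_div,
          inv_mul_cancel₀ hε.ne', Real.rpow_one] at this
      have h3 : ((a:ℝ) + 1) ≤ (2:ℝ) ^ (a:ℕ) := by
        exact_mod_cast Nat.lt_two_pow_self (n := a)
      have h4 : ((2:ℝ)) ^ (a:ℕ) ≤ ((p:ℝ) ^ ε) ^ (a:ℕ) :=
        pow_le_pow_left₀ (by norm_num) h2 a
      have h5 : ((p:ℝ) ^ ε) ^ (a:ℕ) = (p:ℝ) ^ ((a:ℝ) * ε) := by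
        rw [← Real.rpow_natCast ((p:ℝ) ^ ε) a, ← Real.rpow_mul hppos.le, mul_comm]
      push_cast
      rw [one_mul]
      calc ((a:ℝ) + 1) ≤ (2:ℝ) ^ (a:ℕ) := h3
      _ ≤ ((p:ℝ) ^ ε) ^ (a:ℕ) := h4
      _ = (p:ℝ) ^ ((a:ℝ) * ε) := h5
  -- now assemble
  have hτ : (n.divisors.card : ℝ) = ∏ p ∈ n.primeFactors, ((n.factorization p + 1 : ℕ) : ℝ) := by
    rw [Nat.card_divisors hn]
    push_cast
    rfl
  have hnε : (n:ℝ) ^ ε = ∏ p ∈ n.primeFactors, ((p:ℝ) ^ (n.factorization p : ℕ)) ^ ε := by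
    rw [Real.finset_prod_rpow _ _ (fun i _ => by positivity)]
    congr 1
    have h0 : (∏ p ∈ n.primeFactors, p ^ n.factorization p) = n := by
      conv_rhs => rw [← Nat.factorization_prod_pow_eq_self hn]
      rfl
    exact_mod_cast h0.symm
  have step1 : (n.divisors.card : ℝ) ≤
      (∏ p ∈ n.primeFactors, (if (p:ℝ) ≤ (2:ℝ) ^ (1/ε) then K else 1)) * (n:ℝ) ^ ε := by
    rw [hτ, hnε, ← Finset.prod_mul_distrib]
    exact Finset.prod_le_prod (fun i _ => by positivity) key
  have step2 : (∏ p ∈ n.primeFactors, (if (p:ℝ) ≤ (2:ℝ) ^ (1/ε) then K else 1)) ≤ K ^ P := by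
    rw [Finset.prod_ite, Finset.prod_const, Finset.prod_const, one_pow, mul_one]
    have hsub : (n.primeFactors.filter (fun p : ℕ => (p:ℝ) ≤ (2:ℝ) ^ (1/ε))) ⊆ Finset.Icc 1 P := by
      intro p hp
      simp only [Finset.mem_filter] at hp
      have hpp : p.Prime := Nat.prime_of_mem_primeFactors hp.1
      have : (p:ℝ) ≤ (P:ℝ) := le_trans hp.2 (Nat.le_ceil _)
      exact Finset.mem_Icc.2 ⟨hpp.one_lt.le, by exact_mod_cast this⟩
    have hcard : (n.primeFactors.filter (fun p : ℕ => (p:ℝ) ≤ (2:ℝ) ^ (1/ε))).card ≤ P := by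
      have := Finset.card_le_card hsub
      simpa [Nat.card_Icc] using this
    exact pow_le_pow_right₀ hK1 hcard
  have hn1 : (0:ℝ) ≤ (n:ℝ) ^ ε := by positivity
  calc (n.divisors.card : ℝ) ≤ _ := step1
  _ ≤ K ^ P * (n:ℝ) ^ ε := mul_le_mul_of_nonneg_right step2 hn1

lemma count_lemma (z y₁ y₂ : ℤ) (hN : (z^2-4)*(y₁^2-y₂^2) ≠ 0)
    (s : Finset ((ℤ × ℤ) × ℤ × ℤ))
    (hs : ∀ q ∈ s, q.1.2 = y₁ ∧ q.2.2 = y₂ ∧ Mk q.1.1 y₁ z = Mk q.2.1 y₂ z) :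
    s.card ≤ 2 * ((z^2-4)*(y₁^2-y₂^2)).natAbs.divisors.card := by
  set N : ℤ := (z^2-4)*(y₁^2-y₂^2) with hNdef
  set d : ((ℤ × ℤ) × ℤ × ℤ) → ℤ := fun q => (2*q.1.1 - y₁*z) - (2*q.2.1 - y₂*z) with hd
  set f : ((ℤ × ℤ) × ℤ × ℤ) → ℕ := fun q => (d q).natAbs with hf
  have key : ∀ q ∈ s, d q * ((2*q.1.1 - y₁*z) + (2*q.2.1 - y₂*z)) = N := by
    intro q hq
    have h := (hs q hq).2.2
    simp only [Mk] at h
    simp only [hd, hNdef]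
    linear_combination 4 * h
  have hd0 : ∀ q ∈ s, d q ≠ 0 := by
    intro q hq h0
    apply hN
    rw [← key q hq, h0, zero_mul]
  -- injectivity of d on s
  have hinj : ∀ q ∈ s, ∀ q' ∈ s, d q = d q' → q = q' := by
    intro q hq q' hq' hdd
    have k1 := key q hq
    have k2 := key q' hq'
    rw [hdd] at k1
    have he : (2*q.1.1 - y₁*z) + (2*q.2.1 - y₂*z) = (2*q'.1.1 - y₁*z) + (2*q'.2.1 - y₂*z) :=
      mul_left_cancel₀ (hd0 q' hq') (k1.trans k2.symm)
    have hdq : d q = d q' := hdd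
    simp only [hd] at hdq
    have hx1 : q.1.1 = q'.1.1 := by omega
    have hx2 : q.2.1 = q'.2.1 := by omega
    have hy1 := (hs q hq).1; have hy2 := (hs q hq).2.1
    have hy1' := (hs q' hq').1; have hy2' := (hs q' hq').2.1
    ext
    · exact hx1
    · rw [hy1, hy1']
    · exact hx2
    · rw [hy2, hy2']
  have himage : s.image f ⊆ N.natAbs.divisors := by
    intro m hm
    rw [Finset.mem_image] at hm
    obtain ⟨q, hq, rfl⟩ := hm
    rw [Nat.mem_divisors]
    refine ⟨?_, Int.natAbs_ne_zero.2 hN⟩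
    exact Int.natAbs_dvd_natAbs.2 ⟨_, (key q hq).symm⟩
  have hfib : ∀ m ∈ s.image f, (s.filter (fun q => f q = m)).card ≤ 2 := by
    intro m _
    have hsub : s.filter (fun q => f q = m) ⊆
        (s.filter (fun q => d q = (m:ℤ))) ∪ (s.filter (fun q => d q = -(m:ℤ))) := by
      intro q hq
      rw [Finset.mem_filter] at hq
      rcases Int.natAbs_eq (d q) with h | h
      · exact Finset.mem_union_left _ (Finset.mem_filter.2 ⟨hq.1, by rw [← hq.2]; exact h⟩)
      · exact Finset.mem_union_right _ (Finset.mem_filter.2 ⟨hq.1, by rw [← hq.2]; exact h⟩)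
    have h1 : (s.filter (fun q => d q = (m:ℤ))).card ≤ 1 := by
      apply Finset.card_le_one.2
      intro a ha b hb
      rw [Finset.mem_filter] at ha hb
      exact hinj a ha.1 b hb.1 (ha.2.trans hb.2.symm)
    have h2 : (s.filter (fun q => d q = -(m:ℤ))).card ≤ 1 := by
      apply Finset.card_le_one.2
      intro a ha b hb
      rw [Finset.mem_filter] at ha hb
      exact hinj a ha.1 b hb.1 (ha.2.trans hb.2.symm)
    calc (s.filter (fun q => f q = m)).card ≤ _ := Finset.card_le_card hsub
    _ ≤ _ := Finset.card_union_le _ _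
    _ ≤ 2 := by omega
  calc s.card ≤ 2 * (s.image f).card := Finset.card_le_mul_card_image s 2 hfib
  _ ≤ 2 * N.natAbs.divisors.card := by
      have := Finset.card_le_card himage
      omega

lemma card_Icc_le (W : ℝ) (hW : 1 ≤ W) :
    ((Finset.Icc ⌈W⌉ ⌊2*W⌋).card : ℝ) ≤ 2*W := by
  rcases le_or_gt (⌊2*W⌋ + 1 - ⌈W⌉) 0 with h | h
  · have h0 : (Finset.Icc ⌈W⌉ ⌊2*W⌋).card = 0 := by
      rw [Int.card_Icc]; omega
    rw [h0]; push_cast; linarith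
  · rw [Int.card_Icc]
    have h2 : (((⌊2*W⌋ + 1 - ⌈W⌉).toNat : ℤ) : ℝ) = ((⌊2*W⌋ + 1 - ⌈W⌉ : ℤ) : ℝ) := by
      rw [Int.toNat_of_nonneg h.le]
    push_cast at h2 ⊢
    rw [h2]
    have f1 : (⌊2*W⌋ : ℝ) ≤ 2*W := Int.floor_le _
    have f2 : W ≤ (⌈W⌉:ℝ) := Int.le_ceil _
    linarith

lemma mem_box_of_ne_zero (ν : ℝ → ℝ) (hsupp : Function.support ν ⊆ Set.Icc 1 2)
    (W : ℝ) (w : ℤ) (hW : 0 < W) (h : ν ((w:ℝ)/W) ≠ 0) :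
    w ∈ Finset.Icc ⌈W⌉ ⌊2*W⌋ := by
  have hmem : ((w:ℝ)/W) ∈ Set.Icc (1:ℝ) 2 := hsupp h
  obtain ⟨h1, h2⟩ := hmem
  rw [le_div_iff₀ hW, one_mul] at h1
  rw [div_le_iff₀ hW] at h2
  rw [Finset.mem_Icc]
  constructor
  · exact Int.ceil_le.2 h1
  · exact Int.le_floor.2 (by linarith)

set_option maxHeartbeats 2000000 in
/-- Diagonal estimate: for `0 < η ≪ δ ≪ 1`, `B ≥ 1`, `Y_i ∈ [B^{1-δ}, B^{1-δ+η}]`,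
`Z_i ∈ [B^{δ+η}, B^{δ+2η}]`, `X_i := B²/(Y_iZ_i)` and `z ∈ ℤ` with
`B^{δ+η} ≤ |z| ≤ 2B^{δ+2η}`, for every `ε > 0`:
`∑_{M(x₁,y₁,z)=M(x₂,y₂,z)} ∏_i ν(y_i/Y_i)ν(x_i/X_i) - ∑_{x,y} ∏_i ν(y/Y_i)ν(x/X_i)
  ≪_ε B^ε·Y₁Y₂`. -/
theorem stmt10 (ν : ℝ → ℝ) (hν : ContDiff ℝ (⊤ : ℕ∞) ν) (hν0 : ∀ t : ℝ, 0 ≤ ν t)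
    (hsupp : Function.support ν ⊆ Set.Icc 1 2) (hmass : ∫ t : ℝ, ν t = 1) :
    ∃ δ₀ : ℝ, 0 < δ₀ ∧ ∀ δ : ℝ, 0 < δ → δ ≤ δ₀ →
      ∃ η₀ : ℝ, 0 < η₀ ∧ ∀ η : ℝ, 0 < η → η ≤ η₀ →
        ∀ ε : ℝ, 0 < ε → ∃ C : ℝ, 0 < C ∧
          ∀ B : ℝ, 1 ≤ B →
          ∀ Y₁ Y₂ Z₁ Z₂ : ℝ,
            Y₁ ∈ Set.Icc (B ^ (1 - δ)) (B ^ (1 - δ + η)) →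
            Y₂ ∈ Set.Icc (B ^ (1 - δ)) (B ^ (1 - δ + η)) →
            Z₁ ∈ Set.Icc (B ^ (δ + η)) (B ^ (δ + 2 * η)) →
            Z₂ ∈ Set.Icc (B ^ (δ + η)) (B ^ (δ + 2 * η)) →
          ∀ z : ℤ, B ^ (δ + η) ≤ |(z : ℝ)| → |(z : ℝ)| ≤ 2 * B ^ (δ + 2 * η) →
            |(∑' q : (ℤ × ℤ) × ℤ × ℤ,
                if Mk q.1.1 q.1.2 z = Mk q.2.1 q.2.2 z then
                  ν ((q.1.2 : ℝ) / Y₁) * ν ((q.1.1 : ℝ) / (B ^ (2 : ℕ) / (Y₁ * Z₁))) *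
                    (ν ((q.2.2 : ℝ) / Y₂) * ν ((q.2.1 : ℝ) / (B ^ (2 : ℕ) / (Y₂ * Z₂))))
                else 0) -
              (∑' q : ℤ × ℤ,
                ν ((q.2 : ℝ) / Y₁) * ν ((q.1 : ℝ) / (B ^ (2 : ℕ) / (Y₁ * Z₁))) *
                  (ν ((q.2 : ℝ) / Y₂) * ν ((q.1 : ℝ) / (B ^ (2 : ℕ) / (Y₂ * Z₂)))))| ≤
              C * B ^ ε * (Y₁ * Y₂) := by
  refine ⟨1/4, by norm_num, fun δ hδ hδ4 => ⟨δ/4, by positivity, fun η hη hη4 => fun ε hε => ?_⟩⟩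
  -- bounded maximum of ν
  obtain ⟨t₀, ht₀, hmax'⟩ := IsCompact.exists_isMaxOn (isCompact_Icc (a := (1:ℝ)) (b := 2))
    (Set.nonempty_Icc.2 (by norm_num : (1:ℝ) ≤ 2)) (hν.continuous.continuousOn)
  have hmax : ∀ t ∈ Set.Icc (1:ℝ) 2, ν t ≤ ν t₀ := fun t ht => hmax' ht
  set M : ℝ := ν t₀ with hMdef
  have hM0 : 0 ≤ M := hν0 t₀
  have hMb : ∀ t, ν t ≤ M := by
    intro t
    by_cases ht : t ∈ Set.Icc (1:ℝ) 2
    · exact hmax t ht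
    · have : ν t = 0 := by
        by_contra h
        exact ht (hsupp h)
      rw [this]; exact hM0
  -- divisor bound constant
  set ε' : ℝ := (min ε 1) / 4 with hε'def
  have hε' : 0 < ε' := by
    have := lt_min hε one_pos
    positivity
  obtain ⟨C', hC'1, hC'⟩ := divisor_bound ε' hε'
  -- small-B threshold
  set B₀ : ℝ := max ((4:ℝ) ^ (1/(2*η))) ((2:ℝ) ^ (1/(δ+η))) with hB₀def
  have hB₀1 : (1:ℝ) ≤ B₀ := le_trans (Real.one_le_rpow (by norm_num) (by positivity)) (le_max_left _ _)
  refine ⟨(M+1)^4 * (256*C' + 16*B₀^2) + 1, by positivity, ?_⟩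
  intro B hB Y₁ Y₂ Z₁ Z₂ hY₁ hY₂ hZ₁ hZ₂ z hz1 hz2
  have hB0 : (0:ℝ) < B := lt_of_lt_of_le one_pos hB
  obtain ⟨hY₁l, hY₁u⟩ := hY₁
  obtain ⟨hY₂l, hY₂u⟩ := hY₂
  obtain ⟨hZ₁l, hZ₁u⟩ := hZ₁
  obtain ⟨hZ₂l, hZ₂u⟩ := hZ₂
  set X₁ : ℝ := B ^ (2:ℕ) / (Y₁ * Z₁) with hX₁def
  set X₂ : ℝ := B ^ (2:ℕ) / (Y₂ * Z₂) with hX₂def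
  -- basic positivity / rpow facts
  have hmono : ∀ a b : ℝ, a ≤ b → B ^ a ≤ B ^ b := fun a b h =>
    Real.rpow_le_rpow_of_exponent_le hB h
  have hrp1 : ∀ a : ℝ, 0 ≤ a → (1:ℝ) ≤ B ^ a := fun a ha => Real.one_le_rpow hB ha
  have hB2 : B ^ (2:ℕ) = B ^ ((2:ℝ)) := by
    rw [← Real.rpow_natCast B 2]; norm_num
  have hY₁1 : (1:ℝ) ≤ Y₁ := le_trans (hrp1 _ (by linarith)) hY₁l
  have hY₂1 : (1:ℝ) ≤ Y₂ := le_trans (hrp1 _ (by linarith)) hY₂l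
  have hZ₁1 : (1:ℝ) ≤ Z₁ := le_trans (hrp1 _ (by positivity)) hZ₁l
  have hZ₂1 : (1:ℝ) ≤ Z₂ := le_trans (hrp1 _ (by positivity)) hZ₂l
  have hY₁B : Y₁ ≤ B := le_trans hY₁u (by
    have := hmono (1-δ+η) 1 (by linarith)
    rwa [Real.rpow_one] at this)
  have hY₂B : Y₂ ≤ B := le_trans hY₂u (by
    have := hmono (1-δ+η) 1 (by linarith)
    rwa [Real.rpow_one] at this)
  have hX₁pos : 0 < X₁ := by
    rw [hX₁def]; positivity
  have hX₂pos : 0 < X₂ := by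
    rw [hX₂def]; positivity
  have hX₁le : X₁ ≤ B ^ ((1:ℝ)-η) := by
    have hYZ : B ^ ((1:ℝ)+η) ≤ Y₁ * Z₁ := by
      calc B ^ ((1:ℝ)+η) = B ^ ((1:ℝ)-δ) * B ^ (δ+η) := by
            rw [← Real.rpow_add hB0]; ring_nf
      _ ≤ Y₁ * Z₁ := mul_le_mul hY₁l hZ₁l (by positivity) (by linarith)
    calc X₁ ≤ B ^ (2:ℕ) / B ^ ((1:ℝ)+η) := by
          rw [hX₁def]
          gcongr <;> first | exact hYZ | positivity
    _ = B ^ ((1:ℝ)-η) := by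
          rw [hB2, ← Real.rpow_sub hB0]; congr 1; ring
  have hX₂le : X₂ ≤ B ^ ((1:ℝ)-η) := by
    have hYZ : B ^ ((1:ℝ)+η) ≤ Y₂ * Z₂ := by
      calc B ^ ((1:ℝ)+η) = B ^ ((1:ℝ)-δ) * B ^ (δ+η) := by
            rw [← Real.rpow_add hB0]; ring_nf
      _ ≤ Y₂ * Z₂ := mul_le_mul hY₂l hZ₂l (by positivity) (by linarith)
    calc X₂ ≤ B ^ (2:ℕ) / B ^ ((1:ℝ)+η) := by
          rw [hX₂def]
          gcongr <;> first | exact hYZ | positivity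
    _ = B ^ ((1:ℝ)-η) := by
          rw [hB2, ← Real.rpow_sub hB0]; congr 1; ring
  have hX₁ge : B ^ ((1:ℝ)-3*η) ≤ X₁ := by
    have hYZ : Y₁ * Z₁ ≤ B ^ ((1:ℝ)+3*η) := by
      calc Y₁ * Z₁ ≤ B ^ ((1:ℝ)-δ+η) * B ^ (δ+2*η) :=
            mul_le_mul hY₁u hZ₁u (by linarith) (by positivity)
      _ = B ^ ((1:ℝ)+3*η) := by rw [← Real.rpow_add hB0]; ring_nf
    calc B ^ ((1:ℝ)-3*η) = B ^ (2:ℕ) / B ^ ((1:ℝ)+3*η) := by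
          rw [hB2, ← Real.rpow_sub hB0]; congr 1; ring
    _ ≤ X₁ := by
          rw [hX₁def]
          gcongr <;> first | exact hYZ | positivity
  have hX₂ge : B ^ ((1:ℝ)-3*η) ≤ X₂ := by
    have hYZ : Y₂ * Z₂ ≤ B ^ ((1:ℝ)+3*η) := by
      calc Y₂ * Z₂ ≤ B ^ ((1:ℝ)-δ+η) * B ^ (δ+2*η) :=
            mul_le_mul hY₂u hZ₂u (by linarith) (by positivity)
      _ = B ^ ((1:ℝ)+3*η) := by rw [← Real.rpow_add hB0]; ring_nf
    calc B ^ ((1:ℝ)-3*η) = B ^ (2:ℕ) / B ^ ((1:ℝ)+3*η) := by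
          rw [hB2, ← Real.rpow_sub hB0]; congr 1; ring
    _ ≤ X₂ := by
          rw [hX₂def]
          gcongr <;> first | exact hYZ | positivity
  have hX₁1 : (1:ℝ) ≤ X₁ := le_trans (hrp1 _ (by linarith)) hX₁ge
  have hX₂1 : (1:ℝ) ≤ X₂ := le_trans (hrp1 _ (by linarith)) hX₂ge
  have hX₁B : X₁ ≤ B := le_trans hX₁le (by
    have := hmono (1-η) 1 (by linarith)
    rwa [Real.rpow_one] at this)
  have hX₂B : X₂ ≤ B := le_trans hX₂le (by
    have := hmono (1-η) 1 (by linarith)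
    rwa [Real.rpow_one] at this)
  -- boxes
  set Ix₁ : Finset ℤ := Finset.Icc ⌈X₁⌉ ⌊2*X₁⌋ with hIx₁
  set Ix₂ : Finset ℤ := Finset.Icc ⌈X₂⌉ ⌊2*X₂⌋ with hIx₂
  set Iy₁ : Finset ℤ := Finset.Icc ⌈Y₁⌉ ⌊2*Y₁⌋ with hIy₁
  set Iy₂ : Finset ℤ := Finset.Icc ⌈Y₂⌉ ⌊2*Y₂⌋ with hIy₂
  set bigBox : Finset ((ℤ × ℤ) × ℤ × ℤ) := (Ix₁ ×ˢ Iy₁) ×ˢ (Ix₂ ×ˢ Iy₂) with hbigBox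
  set box₂ : Finset (ℤ × ℤ) := (Ix₁ ∩ Ix₂) ×ˢ (Iy₁ ∩ Iy₂) with hbox₂
  set F : ((ℤ × ℤ) × ℤ × ℤ) → ℝ := fun q =>
    ν ((q.1.2 : ℝ) / Y₁) * ν ((q.1.1 : ℝ) / X₁) * (ν ((q.2.2 : ℝ) / Y₂) * ν ((q.2.1 : ℝ) / X₂))
    with hF
  have hF0 : ∀ q, 0 ≤ F q := by
    intro q
    have := hν0 ((q.1.2 : ℝ) / Y₁); have := hν0 ((q.1.1 : ℝ) / X₁)
    have := hν0 ((q.2.2 : ℝ) / Y₂); have := hν0 ((q.2.1 : ℝ) / X₂)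
    rw [hF]; positivity
  have hFM : ∀ q, F q ≤ M^4 := by
    intro q
    rw [hF]
    have n1 := hν0 ((q.1.2 : ℝ) / Y₁); have n2 := hν0 ((q.1.1 : ℝ) / X₁)
    have n3 := hν0 ((q.2.2 : ℝ) / Y₂); have n4 := hν0 ((q.2.1 : ℝ) / X₂)
    have b1 := hMb ((q.1.2 : ℝ) / Y₁); have b2 := hMb ((q.1.1 : ℝ) / X₁)
    have b3 := hMb ((q.2.2 : ℝ) / Y₂); have b4 := hMb ((q.2.1 : ℝ) / X₂)
    have h12 : ν ((q.1.2 : ℝ) / Y₁) * ν ((q.1.1 : ℝ) / X₁) ≤ M * M := mul_le_mul b1 b2 n2 hM0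
    have h34 : ν ((q.2.2 : ℝ) / Y₂) * ν ((q.2.1 : ℝ) / X₂) ≤ M * M := mul_le_mul b3 b4 n4 hM0
    calc ν ((q.1.2 : ℝ) / Y₁) * ν ((q.1.1 : ℝ) / X₁) * (ν ((q.2.2 : ℝ) / Y₂) * ν ((q.2.1 : ℝ) / X₂))
        ≤ (M * M) * (M * M) := mul_le_mul h12 h34 (by positivity) (by positivity)
    _ = M ^ 4 := by ring
  -- rewrite the two tsums as finite sums
  have hsum1 : (∑' q : (ℤ × ℤ) × ℤ × ℤ,
      if Mk q.1.1 q.1.2 z = Mk q.2.1 q.2.2 z then F q else 0) =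
      ∑ q ∈ bigBox.filter (fun q => Mk q.1.1 q.1.2 z = Mk q.2.1 q.2.2 z), F q := by
    rw [Finset.sum_filter]
    apply tsum_eq_sum
    intro q hq
    by_cases hMk : Mk q.1.1 q.1.2 z = Mk q.2.1 q.2.2 z
    · simp only [if_pos hMk]
      by_contra hne
      apply hq
      have h1 : ν ((q.1.2 : ℝ) / Y₁) ≠ 0 := fun h => hne (by rw [hF]; simp [h])
      have h2 : ν ((q.1.1 : ℝ) / X₁) ≠ 0 := fun h => hne (by rw [hF]; simp [h])
      have h3 : ν ((q.2.2 : ℝ) / Y₂) ≠ 0 := fun h => hne (by rw [hF]; simp [h])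
      have h4 : ν ((q.2.1 : ℝ) / X₂) ≠ 0 := fun h => hne (by rw [hF]; simp [h])
      rw [hbigBox]
      rw [Finset.mem_product]
      constructor
      · rw [Finset.mem_product]
        exact ⟨mem_box_of_ne_zero ν hsupp X₁ q.1.1 hX₁pos h2,
               mem_box_of_ne_zero ν hsupp Y₁ q.1.2 (by linarith) h1⟩
      · rw [Finset.mem_product]
        exact ⟨mem_box_of_ne_zero ν hsupp X₂ q.2.1 hX₂pos h4,
               mem_box_of_ne_zero ν hsupp Y₂ q.2.2 (by linarith) h3⟩
    · simp [hMk]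
  have hsum2 : (∑' p : ℤ × ℤ,
      ν ((p.2 : ℝ) / Y₁) * ν ((p.1 : ℝ) / X₁) * (ν ((p.2 : ℝ) / Y₂) * ν ((p.1 : ℝ) / X₂))) =
      ∑ p ∈ box₂,
      ν ((p.2 : ℝ) / Y₁) * ν ((p.1 : ℝ) / X₁) * (ν ((p.2 : ℝ) / Y₂) * ν ((p.1 : ℝ) / X₂)) := by
    apply tsum_eq_sum
    intro p hp
    by_contra hne
    apply hp
    have h1 : ν ((p.2 : ℝ) / Y₁) ≠ 0 := fun h => hne (by simp [h])
    have h2 : ν ((p.1 : ℝ) / X₁) ≠ 0 := fun h => hne (by simp [h])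
    have h3 : ν ((p.2 : ℝ) / Y₂) ≠ 0 := fun h => hne (by simp [h])
    have h4 : ν ((p.1 : ℝ) / X₂) ≠ 0 := fun h => hne (by simp [h])
    rw [hbox₂, Finset.mem_product]
    constructor
    · rw [Finset.mem_inter]
      exact ⟨mem_box_of_ne_zero ν hsupp X₁ p.1 hX₁pos h2,
             mem_box_of_ne_zero ν hsupp X₂ p.1 hX₂pos h4⟩
    · rw [Finset.mem_inter]
      exact ⟨mem_box_of_ne_zero ν hsupp Y₁ p.2 (by linarith) h1,
             mem_box_of_ne_zero ν hsupp Y₂ p.2 (by linarith) h3⟩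
  set T : Finset ((ℤ × ℤ) × ℤ × ℤ) :=
    bigBox.filter (fun q => Mk q.1.1 q.1.2 z = Mk q.2.1 q.2.2 z) with hT
  set S : Finset ((ℤ × ℤ) × ℤ × ℤ) := T.filter (fun q => ¬ q.1 = q.2) with hS
  -- diagonal part equals second sum
  have hdiag : ∑ q ∈ T.filter (fun q => q.1 = q.2), F q =
      ∑ p ∈ box₂,
      ν ((p.2 : ℝ) / Y₁) * ν ((p.1 : ℝ) / X₁) * (ν ((p.2 : ℝ) / Y₂) * ν ((p.1 : ℝ) / X₂)) := by
    apply Finset.sum_nbij' (i := fun q : (ℤ × ℤ) × ℤ × ℤ => q.1) (j := fun p : ℤ × ℤ => (p, p))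
    · intro q hq
      rw [hT] at hq
      rw [Finset.mem_filter] at hq
      obtain ⟨hqB, hdg⟩ := hq
      rw [Finset.mem_filter] at hqB
      obtain ⟨hqb, _⟩ := hqB
      rw [hbigBox, Finset.mem_product, Finset.mem_product, Finset.mem_product] at hqb
      rw [hbox₂, Finset.mem_product, Finset.mem_inter, Finset.mem_inter]
      refine ⟨⟨hqb.1.1, ?_⟩, hqb.1.2, ?_⟩
      · rw [hdg]; exact hqb.2.1
      · rw [hdg]; exact hqb.2.2
    · intro p hp
      rw [hbox₂, Finset.mem_product, Finset.mem_inter, Finset.mem_inter] at hp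
      rw [Finset.mem_filter, hT, Finset.mem_filter]
      refine ⟨⟨?_, rfl⟩, rfl⟩
      rw [hbigBox, Finset.mem_product, Finset.mem_product, Finset.mem_product]
      exact ⟨⟨hp.1.1, hp.2.1⟩, hp.1.2, hp.2.2⟩
    · intro q hq
      rw [Finset.mem_filter] at hq
      exact Prod.ext rfl hq.2
    · intro p hp
      rfl
    · intro q hq
      rw [Finset.mem_filter] at hq
      rw [hF]
      simp only
      rw [← hq.2]
  -- the difference is the off-diagonal sum
  have hsplit : ∑ q ∈ T, F q =
      (∑ q ∈ T.filter (fun q => q.1 = q.2), F q) + ∑ q ∈ S, F q := by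
    rw [hS]
    exact (Finset.sum_filter_add_sum_filter_not T _ F).symm
  have hcongr1 : (∑' q : (ℤ × ℤ) × ℤ × ℤ,
      if Mk q.1.1 q.1.2 z = Mk q.2.1 q.2.2 z then
        ν ((q.1.2 : ℝ) / Y₁) * ν ((q.1.1 : ℝ) / X₁) *
          (ν ((q.2.2 : ℝ) / Y₂) * ν ((q.2.1 : ℝ) / X₂))
      else 0) = (∑' q : (ℤ × ℤ) × ℤ × ℤ,
      if Mk q.1.1 q.1.2 z = Mk q.2.1 q.2.2 z then F q else 0) :=
    tsum_congr (fun q => by rw [hF])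
  rw [hcongr1, hsum1, hsum2, hsplit, hdiag, add_sub_cancel_left,
    abs_of_nonneg (Finset.sum_nonneg (fun q _ => hF0 q))]
  have hsumM : ∑ q ∈ S, F q ≤ M^4 * (S.card : ℝ) := by
    calc ∑ q ∈ S, F q ≤ S.card • (M^4) := Finset.sum_le_card_nsmul S F (M^4) (fun q _ => hFM q)
    _ = (S.card : ℝ) * M^4 := nsmul_eq_mul _ _
    _ = M^4 * (S.card : ℝ) := by ring
  have hBε : (1:ℝ) ≤ B ^ ε := hrp1 ε hε.le
  have hBεpos : (0:ℝ) < B ^ ε := by positivity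
  have hMM : M^4 ≤ (M+1)^4 := pow_le_pow_left₀ hM0 (by linarith) 4
  have hY₁Y₂ : (0:ℝ) < Y₁ * Y₂ := mul_pos (by linarith) (by linarith)
  -- real bounds from box membership
  have hbox_mem : ∀ (W : ℝ) (w : ℤ), w ∈ Finset.Icc ⌈W⌉ ⌊2*W⌋ → W ≤ (w:ℝ) ∧ (w:ℝ) ≤ 2*W := by
    intro W w hw
    rw [Finset.mem_Icc] at hw
    exact ⟨Int.ceil_le.1 hw.1, Int.le_floor.1 hw.2⟩
  have hSsub : S ⊆ bigBox := by
    intro q hq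
    rw [hS, Finset.mem_filter, hT, Finset.mem_filter] at hq
    exact hq.1.1
  rcases le_or_gt B B₀ with hBsmall | hBbig
  · -- small B : crude bound
    have hScard : (S.card : ℝ) ≤ 16 * B₀^2 * (Y₁ * Y₂) := by
      have h1 : (S.card : ℝ) ≤ (bigBox.card : ℝ) := by
        exact_mod_cast Finset.card_le_card hSsub
      have h2 : (bigBox.card : ℝ) = (Ix₁.card : ℝ) * (Iy₁.card : ℝ) * ((Ix₂.card : ℝ) * (Iy₂.card : ℝ)) := by
        rw [hbigBox]
        push_cast [Finset.card_product]
        ring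
      have c1 : (Ix₁.card : ℝ) ≤ 2 * X₁ := card_Icc_le X₁ hX₁1
      have c2 : (Ix₂.card : ℝ) ≤ 2 * X₂ := card_Icc_le X₂ hX₂1
      have c3 : (Iy₁.card : ℝ) ≤ 2 * Y₁ := card_Icc_le Y₁ hY₁1
      have c4 : (Iy₂.card : ℝ) ≤ 2 * Y₂ := card_Icc_le Y₂ hY₂1
      have hX₁B₀ : X₁ ≤ B₀ := le_trans hX₁B hBsmall
      have hX₂B₀ : X₂ ≤ B₀ := le_trans hX₂B hBsmall
      have p1 : (0:ℝ) ≤ (Ix₁.card : ℝ) := Nat.cast_nonneg _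
      have p2 : (0:ℝ) ≤ (Ix₂.card : ℝ) := Nat.cast_nonneg _
      have p3 : (0:ℝ) ≤ (Iy₁.card : ℝ) := Nat.cast_nonneg _
      have p4 : (0:ℝ) ≤ (Iy₂.card : ℝ) := Nat.cast_nonneg _
      calc (S.card : ℝ) ≤ (Ix₁.card : ℝ) * (Iy₁.card : ℝ) * ((Ix₂.card : ℝ) * (Iy₂.card : ℝ)) := by
            rw [← h2]; exact h1
      _ ≤ (2 * B₀) * (2 * Y₁) * ((2 * B₀) * (2 * Y₂)) := by
            apply mul_le_mul
            · apply mul_le_mul (le_trans c1 (by linarith)) c3 p3 (by positivity)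
            · apply mul_le_mul (le_trans c2 (by linarith)) c4 p4 (by positivity)
            · positivity
            · positivity
      _ = 16 * B₀^2 * (Y₁ * Y₂) := by ring
    calc ∑ q ∈ S, F q ≤ M^4 * (S.card : ℝ) := hsumM
    _ ≤ M^4 * (16 * B₀^2 * (Y₁ * Y₂)) := by
          apply mul_le_mul_of_nonneg_left hScard (by positivity)
    _ ≤ ((M+1)^4 * (256*C' + 16*B₀^2) + 1) * B ^ ε * (Y₁ * Y₂) := by
          have k2 : (0:ℝ) ≤ Y₁ * Y₂ := hY₁Y₂.le
          have k1 : M^4 * (16*B₀^2) ≤ (M+1)^4 * (256*C' + 16*B₀^2) + 1 := by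
            have t1 : M^4 * (16*B₀^2) ≤ (M+1)^4 * (16*B₀^2) :=
              mul_le_mul_of_nonneg_right hMM (by positivity)
            have t2 : (M+1)^4 * (16*B₀^2) ≤ (M+1)^4 * (256*C' + 16*B₀^2) := by
              apply mul_le_mul_of_nonneg_left _ (by positivity)
              have : (0:ℝ) ≤ 256*C' := by positivity
              linarith
            linarith
          have k3 : ((M+1)^4 * (256*C' + 16*B₀^2) + 1) ≤
              ((M+1)^4 * (256*C' + 16*B₀^2) + 1) * B ^ ε := by
            have hpos : (0:ℝ) ≤ (M+1)^4 * (256*C' + 16*B₀^2) + 1 := by positivity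
            have := mul_le_mul_of_nonneg_left hBε hpos
            linarith [mul_one ((M+1)^4 * (256*C' + 16*B₀^2) + 1)]
          calc M^4 * (16 * B₀^2 * (Y₁ * Y₂)) = (M^4 * (16*B₀^2)) * (Y₁*Y₂) := by ring
          _ ≤ ((M+1)^4 * (256*C' + 16*B₀^2) + 1) * (Y₁*Y₂) :=
              mul_le_mul_of_nonneg_right k1 k2
          _ ≤ (((M+1)^4 * (256*C' + 16*B₀^2) + 1) * B ^ ε) * (Y₁*Y₂) :=
              mul_le_mul_of_nonneg_right k3 k2
  · -- large B : divisor counting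
    have h4B : (4:ℝ) < B ^ (2*η) := by
      have h₁ : (4:ℝ) ^ (1/(2*η)) < B := lt_of_le_of_lt (le_max_left _ _) hBbig
      have h₂ := Real.rpow_lt_rpow (by positivity) h₁ (by positivity : (0:ℝ) < 2*η)
      rwa [← Real.rpow_mul (by norm_num : (0:ℝ) ≤ 4), one_div,
        inv_mul_cancel₀ (by positivity : (2*η) ≠ 0), Real.rpow_one] at h₂
    have h2B : (2:ℝ) < B ^ (δ+η) := by
      have h₁ : (2:ℝ) ^ (1/(δ+η)) < B := lt_of_le_of_lt (le_max_right _ _) hBbig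
      have h₂ := Real.rpow_lt_rpow (by positivity) h₁ (by positivity : (0:ℝ) < δ+η)
      rwa [← Real.rpow_mul (by norm_num : (0:ℝ) ≤ 2), one_div,
        inv_mul_cancel₀ (by positivity : (δ+η) ≠ 0), Real.rpow_one] at h₂
    have hzabs : (2:ℝ) < |(z : ℝ)| := lt_of_lt_of_le h2B hz1
    have hzsq : (4:ℝ) < ((z : ℝ))^2 := by
      have h1 : (2:ℝ) * 2 < |(z:ℝ)| * |(z:ℝ)| :=
        mul_lt_mul'' hzabs hzabs (by norm_num) (by norm_num)
      have h2 : |(z:ℝ)| * |(z:ℝ)| = ((z:ℝ))^2 := by rw [← sq_abs ((z:ℝ))]; ring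
      linarith
    have hz24 : (z^2 - 4 : ℤ) ≠ 0 := by
      have : (4:ℤ) < z^2 := by exact_mod_cast (by push_cast; exact hzsq : ((4:ℤ):ℝ) < ((z^2 : ℤ) : ℝ))
      omega
    -- z bound
    have hzB : ((z:ℝ))^2 ≤ 4 * B^(2:ℕ) := by
      have h1 : |(z:ℝ)| ≤ 2 * B := le_trans hz2 (by
        have := hmono (δ + 2*η) 1 (by linarith)
        rw [Real.rpow_one] at this
        linarith)
      have h2 : |(z:ℝ)| * |(z:ℝ)| ≤ (2*B) * (2*B) :=
        mul_le_mul h1 h1 (abs_nonneg _) (by positivity)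
      have h3 : |(z:ℝ)| * |(z:ℝ)| = ((z:ℝ))^2 := by rw [← sq_abs ((z:ℝ))]; ring
      have h4 : (2*B) * (2*B) = 4 * B^(2:ℕ) := by ring
      linarith
    set g : ((ℤ × ℤ) × ℤ × ℤ) → ℤ × ℤ := fun q => (q.1.2, q.2.2) with hg
    have himg : S.image g ⊆ Iy₁ ×ˢ Iy₂ := by
      intro b hb
      rw [Finset.mem_image] at hb
      obtain ⟨q, hq, rfl⟩ := hb
      have hqb := hSsub hq
      rw [hbigBox, Finset.mem_product, Finset.mem_product, Finset.mem_product] at hqb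
      rw [Finset.mem_product]
      exact ⟨hqb.1.2, hqb.2.2⟩
    -- uniform fiber bound
    have hfiber : ∀ b ∈ S.image g, ((S.filter (fun q => g q = b)).card : ℝ) ≤ 64 * C' * B ^ ε := by
      intro b hb
      have hbm := himg hb
      rw [Finset.mem_product] at hbm
      obtain ⟨hb1, hb2⟩ := hbm
      have hy1r := hbox_mem Y₁ b.1 hb1
      have hy2r := hbox_mem Y₂ b.2 hb2
      have hb1pos : (1:ℤ) ≤ b.1 := by
        have : (1:ℝ) ≤ (b.1 : ℝ) := le_trans hY₁1 hy1r.1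
        exact_mod_cast this
      have hb2pos : (1:ℤ) ≤ b.2 := by
        have : (1:ℝ) ≤ (b.2 : ℝ) := le_trans hY₂1 hy2r.1
        exact_mod_cast this
      -- membership data for fiber elements
      have hfib_mem : ∀ q ∈ S.filter (fun q => g q = b),
          q.1.2 = b.1 ∧ q.2.2 = b.2 ∧ Mk q.1.1 b.1 z = Mk q.2.1 b.2 z ∧ ¬ q.1 = q.2 ∧
          q ∈ bigBox := by
        intro q hq
        rw [Finset.mem_filter] at hq
        obtain ⟨hqS, hgq⟩ := hq
        simp only [hg] at hgq
        rw [Prod.ext_iff] at hgq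
        have h1 : q.1.2 = b.1 := hgq.1
        have h2 : q.2.2 = b.2 := hgq.2
        rw [hS, Finset.mem_filter, hT, Finset.mem_filter] at hqS
        refine ⟨h1, h2, ?_, hqS.2, hqS.1.1⟩
        rw [← h1, ← h2]
        exact hqS.1.2
      by_cases hyy : b.1 = b.2
      · -- equal y's : fiber is empty
        have hempty : S.filter (fun q => g q = b) = ∅ := by
          apply Finset.eq_empty_of_forall_notMem
          intro q hq
          obtain ⟨h1, h2, hMk, hne, hqb⟩ := hfib_mem q hq
          simp only [Mk] at hMk
          rw [← hyy] at hMk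
          have hfact : (q.1.1 - q.2.1) * (q.1.1 + q.2.1 - b.1 * z) = 0 := by
            linear_combination hMk
          rcases mul_eq_zero.1 hfact with hc | hc
          · apply hne
            have hx : q.1.1 = q.2.1 := by omega
            have hy : q.1.2 = q.2.2 := by rw [h1, h2, ← hyy]
            exact Prod.ext hx hy
          · -- x₁ + x₂ = b1 * z ; impossible by size
            have hxx : (q.1.1 : ℝ) + (q.2.1 : ℝ) = (b.1 : ℝ) * (z : ℝ) := by
              have : q.1.1 + q.2.1 = b.1 * z := by omega
              exact_mod_cast congrArg (fun t : ℤ => (t : ℝ)) this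
            rw [hbigBox, Finset.mem_product, Finset.mem_product, Finset.mem_product] at hqb
            have hx1 := hbox_mem X₁ q.1.1 hqb.1.1
            have hx2 := hbox_mem X₂ q.2.1 hqb.2.1
            have hup : (b.1 : ℝ) * (z : ℝ) ≤ 4 * B ^ ((1:ℝ) - η) := by
              rw [← hxx]; linarith
            have hlow : B ^ ((1:ℝ) + η) ≤ (b.1 : ℝ) * (z : ℝ) := by
              have hpos : (0:ℝ) < (b.1 : ℝ) * (z : ℝ) := by
                rw [← hxx]
                have := hx1.1; have := hx2.1
                linarith [hX₁pos, hX₂pos]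
              have habs : |(b.1 : ℝ) * (z : ℝ)| = (b.1:ℝ) * |(z:ℝ)| := by
                rw [abs_mul, abs_of_nonneg (by linarith [hy1r.1] : (0:ℝ) ≤ (b.1:ℝ))]
              calc B ^ ((1:ℝ) + η) = B ^ ((1:ℝ)-δ) * B ^ (δ+η) := by
                    rw [← Real.rpow_add hB0]; congr 1; ring
              _ ≤ Y₁ * |(z:ℝ)| := mul_le_mul hY₁l hz1 (by positivity) (by linarith)
              _ ≤ (b.1:ℝ) * |(z:ℝ)| := by
                    apply mul_le_mul_of_nonneg_right hy1r.1 (abs_nonneg _)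
              _ = |(b.1 : ℝ) * (z : ℝ)| := habs.symm
              _ = (b.1 : ℝ) * (z : ℝ) := abs_of_pos hpos
            have hcontr : B ^ ((1:ℝ) + η) = B ^ ((1:ℝ) - η) * B ^ (2*η) := by
              rw [← Real.rpow_add hB0]; congr 1; ring
            have hBpos' : (0:ℝ) < B ^ ((1:ℝ) - η) := by positivity
            have hmul : 4 * B ^ ((1:ℝ) - η) < B ^ (2*η) * B ^ ((1:ℝ) - η) :=
              mul_lt_mul_of_pos_right h4B hBpos'
            have hcomm : B ^ (2*η) * B ^ ((1:ℝ) - η) = B ^ ((1:ℝ) - η) * B ^ (2*η) := by ring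
            linarith [hup, hlow, hcontr, hmul, hcomm]
        rw [hempty]
        simp only [Finset.card_empty, Nat.cast_zero]
        positivity
      · -- distinct y's : divisor count
        have hysq : (b.1^2 - b.2^2 : ℤ) ≠ 0 := by
          intro h0
          have : (b.1 - b.2) * (b.1 + b.2) = 0 := by linear_combination h0
          rcases mul_eq_zero.1 this with hc | hc
          · exact hyy (by omega)
          · omega
        have hN : ((z^2-4) * (b.1^2 - b.2^2) : ℤ) ≠ 0 := mul_ne_zero hz24 hysq
        have hcount := count_lemma z b.1 b.2 hN (S.filter (fun q => g q = b))
          (fun q hq => ⟨(hfib_mem q hq).1, (hfib_mem q hq).2.1, (hfib_mem q hq).2.2.1⟩)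
        have hτ := hC' (((z^2-4) * (b.1^2 - b.2^2)).natAbs) (Int.natAbs_ne_zero.2 hN)
        -- bound |N|
        have hNabs : ((((z^2-4) * (b.1^2 - b.2^2)).natAbs : ℕ) : ℝ) ≤ 32 * B ^ (4:ℝ) := by
          have hcast : ((((z^2-4) * (b.1^2 - b.2^2)).natAbs : ℕ) : ℝ) =
              |((z:ℝ)^2 - 4) * ((b.1:ℝ)^2 - (b.2:ℝ)^2)| := by
            rw [Nat.cast_natAbs]
            push_cast
            ring_nf
          rw [hcast, abs_mul]
          have e1 : |(z:ℝ)^2 - 4| ≤ 4 * B^(2:ℕ) := by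
            rw [abs_of_pos (by linarith)]
            linarith
          have e2 : |(b.1:ℝ)^2 - (b.2:ℝ)^2| ≤ 8 * B^(2:ℕ) := by
            have hb10 : (0:ℝ) ≤ (b.1:ℝ) := by linarith [hy1r.1]
            have hb20 : (0:ℝ) ≤ (b.2:ℝ) := by linarith [hy2r.1]
            have l1 : (b.1:ℝ) * (b.1:ℝ) ≤ (2*Y₁) * (2*Y₁) :=
              mul_le_mul hy1r.2 hy1r.2 hb10 (by positivity)
            have l2 : (b.2:ℝ) * (b.2:ℝ) ≤ (2*Y₂) * (2*Y₂) :=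
              mul_le_mul hy2r.2 hy2r.2 hb20 (by positivity)
            have l3 : Y₁ * Y₁ ≤ B * B := mul_le_mul hY₁B hY₁B (by linarith) (by positivity)
            have l4 : Y₂ * Y₂ ≤ B * B := mul_le_mul hY₂B hY₂B (by linarith) (by positivity)
            have e0 : B * B = B^(2:ℕ) := by ring
            have s1 : (b.1:ℝ)^2 = (b.1:ℝ) * (b.1:ℝ) := by ring
            have s2 : (b.2:ℝ)^2 = (b.2:ℝ) * (b.2:ℝ) := by ring
            have q1 : (0:ℝ) ≤ (b.1:ℝ)^2 := sq_nonneg _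
            have q2 : (0:ℝ) ≤ (b.2:ℝ)^2 := sq_nonneg _
            rw [abs_sub_le_iff]
            constructor <;> linarith [l1, l2, l3, l4, s1, s2, q1, q2, e0]
          have e3 : (0:ℝ) ≤ |(z:ℝ)^2 - 4| := abs_nonneg _
          have e4 : (0:ℝ) ≤ |(b.1:ℝ)^2 - (b.2:ℝ)^2| := abs_nonneg _
          have e5 : B ^ (2:ℕ) * B ^ (2:ℕ) = B ^ (4:ℝ) := by
            rw [hB2, ← Real.rpow_add hB0]; norm_num
          calc |(z:ℝ)^2 - 4| * |(b.1:ℝ)^2 - (b.2:ℝ)^2| ≤ (4 * B^(2:ℕ)) * (8 * B^(2:ℕ)) := by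
                apply mul_le_mul e1 e2 e4 (by positivity)
          _ = 32 * (B ^ (2:ℕ) * B ^ (2:ℕ)) := by ring
          _ = 32 * B ^ (4:ℝ) := by rw [e5]
        -- rpow bound
        have hrpow : ((((z^2-4) * (b.1^2 - b.2^2)).natAbs : ℕ) : ℝ) ^ ε' ≤ 32 * B ^ ε := by
          have h1 : ((((z^2-4) * (b.1^2 - b.2^2)).natAbs : ℕ) : ℝ) ^ ε' ≤ (32 * B ^ (4:ℝ)) ^ ε' :=
            Real.rpow_le_rpow (Nat.cast_nonneg _) hNabs hε'.le
          have h2 : (32 * B ^ (4:ℝ)) ^ ε' = 32 ^ ε' * (B ^ (4:ℝ)) ^ ε' :=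
            Real.mul_rpow (by norm_num) (by positivity)
          have h3 : (32:ℝ) ^ ε' ≤ 32 := by
            calc (32:ℝ) ^ ε' ≤ 32 ^ (1:ℝ) := by
                  apply Real.rpow_le_rpow_of_exponent_le (by norm_num)
                  rw [hε'def]
                  have : min ε 1 ≤ 1 := min_le_right _ _
                  linarith
            _ = 32 := Real.rpow_one _
          have h4 : (B ^ (4:ℝ)) ^ ε' = B ^ (4 * ε') := by
            rw [← Real.rpow_mul hB0.le]
          have h5 : B ^ (4 * ε') ≤ B ^ ε := by
            apply hmono
            rw [hε'def]
            have : min ε 1 ≤ ε := min_le_left _ _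
            linarith
          calc ((((z^2-4) * (b.1^2 - b.2^2)).natAbs : ℕ) : ℝ) ^ ε' ≤ (32 * B ^ (4:ℝ)) ^ ε' := h1
          _ = 32 ^ ε' * (B ^ (4:ℝ)) ^ ε' := h2
          _ = 32 ^ ε' * B ^ (4 * ε') := by rw [h4]
          _ ≤ 32 * B ^ ε := by
                apply mul_le_mul h3 h5 (by positivity) (by norm_num)
        calc ((S.filter (fun q => g q = b)).card : ℝ) ≤
            2 * ((((z^2-4) * (b.1^2 - b.2^2)).natAbs).divisors.card : ℝ) := by
              exact_mod_cast hcount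
        _ ≤ 2 * (C' * ((((z^2-4) * (b.1^2 - b.2^2)).natAbs : ℕ) : ℝ) ^ ε') := by linarith
        _ ≤ 2 * (C' * (32 * B ^ ε)) := by
              have := mul_le_mul_of_nonneg_left hrpow (by linarith : (0:ℝ) ≤ C')
              linarith
        _ = 64 * C' * B ^ ε := by ring
    -- assemble the count
    have hScard : (S.card : ℝ) ≤ 256 * C' * B ^ ε * (Y₁ * Y₂) := by
      have h0 : (S.card : ℝ) = ∑ b ∈ S.image g, ((S.filter (fun q => g q = b)).card : ℝ) := by
        rw [Finset.card_eq_sum_card_image g S]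
        push_cast
        rfl
      have h1 : (S.card : ℝ) ≤ ((S.image g).card : ℝ) * (64 * C' * B ^ ε) := by
        rw [h0]
        calc ∑ b ∈ S.image g, ((S.filter (fun q => g q = b)).card : ℝ) ≤
            (S.image g).card • (64 * C' * B ^ ε) :=
              Finset.sum_le_card_nsmul _ _ _ (fun b hb => hfiber b hb)
        _ = ((S.image g).card : ℝ) * (64 * C' * B ^ ε) := nsmul_eq_mul _ _
      have h2 : ((S.image g).card : ℝ) ≤ 4 * (Y₁ * Y₂) := by
        have hc : ((S.image g).card : ℝ) ≤ ((Iy₁ ×ˢ Iy₂).card : ℝ) := by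
          exact_mod_cast Finset.card_le_card himg
        have hc2 : ((Iy₁ ×ˢ Iy₂).card : ℝ) = (Iy₁.card : ℝ) * (Iy₂.card : ℝ) := by
          push_cast [Finset.card_product]
          ring
        have c3 : (Iy₁.card : ℝ) ≤ 2 * Y₁ := card_Icc_le Y₁ hY₁1
        have c4 : (Iy₂.card : ℝ) ≤ 2 * Y₂ := card_Icc_le Y₂ hY₂1
        calc ((S.image g).card : ℝ) ≤ (Iy₁.card : ℝ) * (Iy₂.card : ℝ) := by rw [← hc2]; exact hc
        _ ≤ (2*Y₁) * (2*Y₂) := mul_le_mul c3 c4 (Nat.cast_nonneg _) (by positivity)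
        _ = 4 * (Y₁ * Y₂) := by ring
      have h3 : (0:ℝ) ≤ 64 * C' * B ^ ε := by positivity
      calc (S.card : ℝ) ≤ ((S.image g).card : ℝ) * (64 * C' * B ^ ε) := h1
      _ ≤ (4 * (Y₁ * Y₂)) * (64 * C' * B ^ ε) := mul_le_mul_of_nonneg_right h2 h3
      _ = 256 * C' * B ^ ε * (Y₁ * Y₂) := by ring
    calc ∑ q ∈ S, F q ≤ M^4 * (S.card : ℝ) := hsumM
    _ ≤ M^4 * (256 * C' * B ^ ε * (Y₁ * Y₂)) := mul_le_mul_of_nonneg_left hScard (by positivity)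
    _ ≤ ((M+1)^4 * (256*C' + 16*B₀^2) + 1) * B ^ ε * (Y₁ * Y₂) := by
          have k1 : M^4 * (256 * C') ≤ (M+1)^4 * (256*C' + 16*B₀^2) + 1 := by
            have t1 : M^4 * (256*C') ≤ (M+1)^4 * (256*C') :=
              mul_le_mul_of_nonneg_right hMM (by positivity)
            have t2 : (M+1)^4 * (256*C') ≤ (M+1)^4 * (256*C' + 16*B₀^2) := by
              apply mul_le_mul_of_nonneg_left _ (by positivity)
              have : (0:ℝ) ≤ 16*B₀^2 := by positivity
              linarith
            linarith
          have k2 : (0:ℝ) ≤ B ^ ε * (Y₁ * Y₂) := by positivity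
          calc M^4 * (256 * C' * B ^ ε * (Y₁ * Y₂)) =
              (M^4 * (256 * C')) * (B ^ ε * (Y₁ * Y₂)) := by ring
          _ ≤ ((M+1)^4 * (256*C' + 16*B₀^2) + 1) * (B ^ ε * (Y₁ * Y₂)) :=
              mul_le_mul_of_nonneg_right k1 k2
          _ = ((M+1)^4 * (256*C' + 16*B₀^2) + 1) * B ^ ε * (Y₁ * Y₂) := by ring
end

section
/- Let p be an odd prime, let ℓ ≥ 2 be an integer, and let a ∈ ℤ. If p^{ℓ−1} does not divide a(a−4), then T_a(p^ℓ) = 0. -/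
/-- `e_m(t) := exp(2πit/m)`. -/
noncomputable def eC (m : ℕ) (t : ℤ) : ℂ :=
  Complex.exp (2 * Real.pi * Complex.I * (t : ℂ) / (m : ℂ))

/-- `T_a(m) := ∑_{1≤u≤m, gcd(u,m)=1} ∑_{1≤x,y,z≤m} e_m(u(M(x,y,z) - a))`. -/
noncomputable def T (a : ℤ) (m : ℕ) : ℂ :=
  ∑ u ∈ (Finset.Icc 1 m).filter fun u => Nat.Coprime u m,
    ∑ x ∈ Finset.Icc (1 : ℤ) (m : ℤ), ∑ y ∈ Finset.Icc (1 : ℤ) (m : ℤ),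
      ∑ z ∈ Finset.Icc (1 : ℤ) (m : ℤ), eC m ((u : ℤ) * (Mk x y z - a))

/-!
Summing over `u` first turns `T_a(p^ℓ)` into `p^ℓ N(p^ℓ) - p^(ℓ+2) N(p^(ℓ-1))`, where `N(p^n)` is
the number of solutions of `M ≡ a (mod p^n)`: the inner sum is the Ramanujan sum `c_{p^ℓ}`, and
`p^(ℓ-1) ∣ M - a` only depends on residues mod `p^(ℓ-1)`. So it suffices that
`N(p^(K+1)) = p² N(p^K)` for `K ≥ 1`.

Solutions at which `∇M ≢ 0 (mod p)` lift `p²`-to-one (Hensel). Modulo an odd prime, the solutions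
with `∇M ≡ 0` are the origin if `p ∣ a`, the four points `2ε` (`ε` a sign vector of product `1`)
if `p ∣ a - 4`, and none otherwise. Near these points, `v = pV` resp. `v = ε(V + 2)` turns `M - a`
into a form `x² + y² + z² + e(xy + yz + zx) - kxyz - b` with `e ∈ {0, -2}` and `p ∣ k`, whose only
singular point mod `p` is the origin. There, `v = pV` replaces `(k, b)` by `(pk, b / p²)` (and
there are no solutions unless `p² ∣ b`), so induction on `K` goes through as long as `p^K ∤ b`,
which is what `p^(ℓ-1) ∤ a(a - 4)` guarantees.
-/

open Finset

section Cube

variable {ι : Type*}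

-- A named predicate, so that its decidability instance is the same for `Fin 3` as for a general
-- index type.
def DvdEach (m : ℤ) (v : ι → ℤ) : Prop := ∀ i, m ∣ v i

instance [Fintype ι] (m : ℤ) : DecidablePred (DvdEach (ι := ι) m) := fun _ =>
  Fintype.decidableForallFintype

lemma periodic_iff_of_modEq {q : ℕ} {P : (ι → ℤ) → Prop} (hP : ∀ v w, P (v + (q : ℤ) • w) ↔ P v)
    {v v' : ι → ℤ} (h : ∀ i, v i ≡ v' i [ZMOD q]) : P v ↔ P v' := by
  choose w hw using fun i => (h i).dvd
  rw [← hP v w]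
  congr!
  ext i
  simp only [Pi.add_apply, Pi.smul_apply, smul_eq_mul]
  linarith [hw i]

variable [Fintype ι] [DecidableEq ι]

noncomputable def cube (q : ℕ) : Finset (ι → ℤ) := Fintype.piFinset fun _ => Ico (0 : ℤ) q

lemma mem_cube {q : ℕ} {v : ι → ℤ} : v ∈ cube q ↔ ∀ i, 0 ≤ v i ∧ v i < q := by
  simp [cube]

lemma emod_mem_cube {q : ℕ} (hq : 0 < q) (v : ι → ℤ) : (fun i => v i % q) ∈ cube q :=
  mem_cube.2 fun i => ⟨Int.emod_nonneg _ (by omega), Int.emod_lt_of_pos _ (by omega)⟩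

lemma card_filter_cube_mul (q n : ℕ) (hq : 0 < q) (P : (ι → ℤ) → Prop) [DecidablePred P] :
    #{v ∈ cube (q * n) | P v} = ∑ v ∈ cube q, #{w ∈ cube n | P (v + (q : ℤ) • w)} := by
  rw [← card_sigma]
  refine card_nbij' (fun v => ⟨fun i => v i % q, fun i => v i / q⟩)
    (fun vw => vw.1 + (q : ℤ) • vw.2) ?_ ?_ ?_ ?_
  · intro v hv
    simp only [coe_filter, Set.mem_ofPred_eq, mem_cube] at hv
    simp only [coe_sigma, Set.mem_sigma_iff, mem_coe, mem_filter, mem_cube]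
    refine ⟨fun i => ⟨Int.emod_nonneg _ (by omega), Int.emod_lt_of_pos _ (by omega)⟩,
      fun i => ⟨Int.ediv_nonneg (hv.1 i).1 (by omega), ?_⟩, ?_⟩
    · exact Int.ediv_lt_of_lt_mul (by omega) (by push_cast at hv; linarith [(hv.1 i).2])
    · convert hv.2 using 1
      ext i
      simp [Int.emod_add_mul_ediv]
  · rintro ⟨v, w⟩ hvw
    simp only [coe_sigma, Set.mem_sigma_iff, mem_coe, mem_filter, mem_cube] at hvw
    simp only [coe_filter, Set.mem_ofPred_eq, mem_cube]
    refine ⟨fun i => ⟨?_, ?_⟩, hvw.2.2⟩ <;> simp only [Pi.add_apply, Pi.smul_apply, smul_eq_mul]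
    · nlinarith [hvw.1 i, hvw.2.1 i]
    · have := (hvw.2.1 i).2
      push_cast
      nlinarith [hvw.1 i, hvw.2.1 i]
  · intro v _
    ext i
    simp [Int.emod_add_mul_ediv]
  · rintro ⟨v, w⟩ hvw
    simp only [coe_sigma, Set.mem_sigma_iff, mem_coe, mem_filter, mem_cube] at hvw
    have hq' : (0 : ℤ) < q := by exact_mod_cast hq
    refine Sigma.ext (funext fun i => ?_) (heq_of_eq (funext fun i => ?_))
    · simp [Int.emod_eq_of_lt (hvw.1 i).1 (hvw.1 i).2]
    · simp [Int.add_mul_ediv_left _ _ hq'.ne', Int.ediv_eq_zero_of_lt (hvw.1 i).1 (hvw.1 i).2]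


lemma card_cube (q : ℕ) : #(cube q : Finset (ι → ℤ)) = q ^ Fintype.card ι := by
  simp [cube]

lemma card_filter_cube_mul_of_periodic (q n : ℕ) (hq : 0 < q) (P : (ι → ℤ) → Prop)
    [DecidablePred P] (hP : ∀ v w, P (v + (q : ℤ) • w) ↔ P v) :
    #{v ∈ cube (q * n) | P v} = n ^ Fintype.card ι * #{v ∈ cube q | P v} := by
  rw [card_filter_cube_mul q n hq, card_filter, mul_sum]
  refine sum_congr rfl fun v _ => ?_
  simp only [hP]
  by_cases h : P v <;> simp [h, card_cube]

lemma card_filter_cube_comp_affine (q : ℕ) (hq : 0 < q) (P : (ι → ℤ) → Prop) [DecidablePred P]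
    (hP : ∀ v w, P (v + (q : ℤ) • w) ↔ P v) (ε c : ι → ℤ) (hε : ∀ i, ε i * ε i = 1) :
    #{v ∈ cube q | P (ε * v + c)} = #{v ∈ cube q | P v} := by
  have emod_eq {x v : ι → ℤ} (hv : v ∈ cube q) (h : ∀ i, x i ≡ v i [ZMOD q]) :
      (fun i => x i % q) = v := by
    ext i
    rw [h i]
    exact Int.emod_eq_of_lt (mem_cube.1 hv i).1 (mem_cube.1 hv i).2
  have inv_left (v : ι → ℤ) (i : ι) : ε i * ((ε i * v i + c i) % q - c i) ≡ v i [ZMOD q] :=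
    (((Int.mod_modEq _ _).sub_right (c i)).mul_left (ε i)).trans
      (by rw [show ε i * (ε i * v i + c i - c i) = v i by linear_combination v i * hε i])
  have inv_right (u : ι → ℤ) (i : ι) : ε i * ((ε i * (u i - c i)) % q) + c i ≡ u i [ZMOD q] :=
    (((Int.mod_modEq _ _).mul_left (ε i)).add_right (c i)).trans
      (by rw [show ε i * (ε i * (u i - c i)) + c i = u i by linear_combination (u i - c i) * hε i])
  refine card_nbij' (fun v i => (ε i * v i + c i) % q) (fun u i => (ε i * (u i - c i)) % q)
    ?_ ?_ ?_ ?_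
  · intro v hv
    simp only [coe_filter, Set.mem_ofPred_eq] at hv ⊢
    exact ⟨emod_mem_cube hq _, (periodic_iff_of_modEq hP fun i => (Int.mod_modEq _ _).symm).1 hv.2⟩
  · intro u hu
    simp only [coe_filter, Set.mem_ofPred_eq] at hu ⊢
    exact ⟨emod_mem_cube hq _, (periodic_iff_of_modEq hP fun i => (inv_right u i).symm).1 hu.2⟩
  · intro v hv
    exact emod_eq (mem_filter.1 hv).1 (inv_left v)
  · intro u hu
    exact emod_eq (mem_filter.1 hu).1 (inv_right u)

lemma card_filter_piFinset_Icc (q : ℕ) (hq : 0 < q) (P : (ι → ℤ) → Prop) [DecidablePred P]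
    (hP : ∀ v w, P (v + (q : ℤ) • w) ↔ P v) :
    #{v ∈ Fintype.piFinset fun _ => Icc (1 : ℤ) q | P v} = #{v ∈ cube q | P v} := by
  rw [← card_filter_cube_comp_affine q hq P hP 1 1 fun _ => mul_one 1]
  refine card_nbij' (· - 1) (· + 1) ?_ ?_ (fun v _ => by simp) (fun v _ => by simp) <;>
  · intro v hv
    simp only [coe_filter, Set.mem_ofPred_eq, Fintype.mem_piFinset, mem_Icc, mem_cube] at hv ⊢
    exact ⟨fun i => by have := hv.1 i; simp; omega, by simpa using hv.2⟩

lemma card_filter_cube_dvd_and (m q : ℕ) (hm : 0 < m) (P : (ι → ℤ) → Prop) [DecidablePred P] :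
    #{v ∈ cube (m * q) | DvdEach m v ∧ P v} = #{V ∈ cube q | P ((m : ℤ) • V)} := by
  have hm' : (0 : ℤ) < m := by exact_mod_cast hm
  refine card_nbij' (fun v i => v i / m) (fun V => (m : ℤ) • V) ?_ ?_ ?_ ?_
  · intro v hv
    simp only [coe_filter, Set.mem_ofPred_eq, mem_cube] at hv ⊢
    obtain ⟨hv, hdvd, hP⟩ := hv
    refine ⟨fun i => ⟨Int.ediv_nonneg (hv i).1 hm'.le, Int.ediv_lt_of_lt_mul hm' ?_⟩, ?_⟩
    · push_cast at hv; linarith [(hv i).2]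
    · convert hP using 1
      ext i
      simp [Int.mul_ediv_cancel' (hdvd i)]
  · intro V hV
    simp only [coe_filter, Set.mem_ofPred_eq, mem_cube] at hV ⊢
    refine ⟨fun i => ⟨by simp; nlinarith [hV.1 i], ?_⟩, fun i => by simp, hV.2⟩
    simp only [Pi.smul_apply, smul_eq_mul]
    push_cast
    nlinarith [hV.1 i]
  · intro v hv
    ext i
    simp [Int.mul_ediv_cancel' ((mem_filter.1 hv).2.1 i)]
  · intro V _
    ext i
    simp [Int.mul_ediv_cancel_left _ hm'.ne']

lemma card_filter_cube_zmod (q : ℕ) [NeZero q] (Q : (ι → ZMod q) → Prop) [DecidablePred Q] :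
    #{w ∈ cube q | Q fun i => (w i : ZMod q)} = #{x | Q x} := by
  refine card_nbij' (fun w i => (w i : ZMod q)) (fun x i => ((x i).val : ℤ)) ?_ ?_ ?_ ?_
  · intro w hw
    simp only [coe_filter, Set.mem_ofPred_eq] at hw
    simpa using hw.2
  · intro x hx
    simp only [coe_filter, Set.mem_ofPred_eq, mem_cube, mem_univ, true_and] at hx ⊢
    exact ⟨fun i => ⟨by positivity, by exact_mod_cast ZMod.val_lt (x i)⟩, by simpa using hx⟩
  · intro w hw
    ext i
    have hi := mem_cube.1 (mem_filter.1 hw).1 i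
    simp only [ZMod.val_intCast, Int.emod_eq_of_lt hi.1 hi.2]
  · intro x _
    ext i
    simp

lemma card_dotProduct_eq {p : ℕ} [Fact p.Prime] {g : ι → ZMod p} (hg : g ≠ 0) (c : ZMod p) :
    #{x | g ⬝ᵥ x = c} = p ^ (Fintype.card ι - 1) := by
  obtain ⟨i, hi⟩ : ∃ i, g i ≠ 0 := Function.ne_iff.1 hg
  have fibre (c : ZMod p) : #{x | g ⬝ᵥ x = c} = #{x | g ⬝ᵥ x = 0} := by
    refine card_equiv (Equiv.addRight (Pi.single i (-(c / g i)))) fun x => ?_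
    simp [dotProduct_add, mul_div_cancel₀ _ hi, ← sub_eq_add_neg, sub_eq_zero]
  have total : p ^ Fintype.card ι = p * #{x | g ⬝ᵥ x = (0 : ZMod p)} := by
    have hcard : #(univ : Finset (ι → ZMod p)) = p ^ Fintype.card ι := by simp
    rw [← hcard, card_eq_sum_card_fiberwise (f := (g ⬝ᵥ ·)) (t := univ) (by simp)]
    simp [fibre]
  obtain ⟨n, hn⟩ : ∃ n, Fintype.card ι = n + 1 := 
    Nat.exists_eq_succ_of_ne_zero (Fintype.card_pos_iff.2 ⟨i⟩).ne'
  rw [hn, pow_succ'] at total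
  rw [fibre, hn, Nat.add_sub_cancel]
  exact (Nat.eq_of_mul_eq_mul_left (Fact.out : p.Prime).pos total).symm

lemma card_filter_cube_dvd_dotProduct_sub {p : ℕ} (hp : p.Prime) {g : ι → ℤ}
    (hg : ¬ DvdEach p g) (c : ℤ) :
    #{w ∈ cube p | (p : ℤ) ∣ g ⬝ᵥ w - c} = p ^ (Fintype.card ι - 1) := by
  have := Fact.mk hp
  have hg' : (fun i => (g i : ZMod p)) ≠ 0 := by
    simpa [DvdEach, funext_iff, ZMod.intCast_zmod_eq_zero_iff_dvd] using hg
  rw [← card_dotProduct_eq hg' (c : ZMod p), ← card_filter_cube_zmod]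
  congr! with w
  rw [← ZMod.intCast_zmod_eq_zero_iff_dvd, Int.cast_sub, sub_eq_zero]
  simp [dotProduct]

end Cube

section Hensel

variable {ι : Type*} [Fintype ι]

/-- Satisfied by every polynomial with integer coefficients and its gradient. -/
def IsIntGradient (g : (ι → ℤ) → ι → ℤ) (f : (ι → ℤ) → ℤ) : Prop :=
  ∀ (P : ℤ) v w, ∃ E, f (v + P • w) = f v + P * (g v ⬝ᵥ w) + P ^ 2 * E

variable {p : ℕ} {f : (ι → ℤ) → ℤ} {g : (ι → ℤ) → ι → ℤ}

lemma IsIntGradient.dvd_add_smul_iff (hf : IsIntGradient g f) {d q : ℤ} (hdq : d ∣ q)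
    (v w : ι → ℤ) : d ∣ f (v + q • w) ↔ d ∣ f v := by
  obtain ⟨E, hE⟩ := hf q v w
  rw [hE, add_assoc, dvd_add_left (hdq.mul_right (g v ⬝ᵥ w + q * E) |>.trans ⟨1, by ring⟩)]

variable [DecidableEq ι]

noncomputable def numSol (p n : ℕ) (f : (ι → ℤ) → ℤ) : ℕ :=
  #{v ∈ cube (p ^ n) | (p : ℤ) ^ n ∣ f v}

noncomputable def numSolWhere (p n : ℕ) (S : (ι → ℤ) → Prop) [DecidablePred S]
    (f : (ι → ℤ) → ℤ) : ℕ :=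
  #{v ∈ cube (p ^ n) | S v ∧ (p : ℤ) ^ n ∣ f v}

lemma numSolWhere_congr {n : ℕ} {S S' : (ι → ℤ) → Prop} [DecidablePred S] [DecidablePred S']
    (h : ∀ v, (p : ℤ) ^ n ∣ f v → (S v ↔ S' v)) : numSolWhere p n S f = numSolWhere p n S' f := by
  simp only [numSolWhere]
  exact congrArg card (filter_congr fun v _ => ⟨fun h' => ⟨(h v h'.2).1 h'.1, h'.2⟩,
    fun h' => ⟨(h v h'.2).2 h'.1, h'.2⟩⟩)

lemma numSolWhere_exists_mem_eq_sum {κ : Type*} (s : Finset κ) {n : ℕ} (S : κ → (ι → ℤ) → Prop)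
    [∀ j, DecidablePred (S j)] (hS : ∀ j ∈ s, ∀ j' ∈ s, ∀ v, S j v → S j' v → j = j') :
    numSolWhere p n (fun v => ∃ j ∈ s, S j v) f = ∑ j ∈ s, numSolWhere p n (S j) f := by
  classical
  simp only [numSolWhere]
  rw [← card_biUnion]
  · congr 1
    ext v
    simp only [mem_filter, mem_biUnion]
    constructor
    · rintro ⟨hv, ⟨j, hj, hS⟩, hf⟩
      exact ⟨j, hj, hv, hS, hf⟩
    · rintro ⟨j, hj, hv, hS, hf⟩
      exact ⟨hv, ⟨j, hj, hS⟩, hf⟩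
  · intro j hj j' hj' hne
    exact disjoint_filter.2 fun v _ h h' => hne (hS j hj j' hj' v h.1 h'.1)

lemma IsIntGradient.card_filter_cube_pow_succ (hf : IsIntGradient g f) (hp : 0 < p) (n : ℕ) :
    #{v ∈ cube (p ^ (n + 1)) | (p : ℤ) ^ n ∣ f v} = p ^ Fintype.card ι * numSol p n f := by
  rw [pow_succ, card_filter_cube_mul_of_periodic _ _ (by positivity)]
  · rfl
  · intro v w
    exact_mod_cast hf.dvd_add_smul_iff dvd_rfl v w

/-- Hensel: over a solution `v` mod `p^K` with `g v ≢ 0`, the lift `v + p^K w` is a solution mod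
`p^(K+1)` iff `w` solves a nontrivial linear congruence mod `p`. -/
theorem IsIntGradient.card_nonsingular_succ (hp : p.Prime) (hf : IsIntGradient g f)
    (hg : ∀ v w i, (p : ℤ) ∣ g (v + (p : ℤ) • w) i - g v i) {K : ℕ} (hK : 1 ≤ K) :
    #{v ∈ cube (p ^ (K + 1)) | ¬ DvdEach p (g v) ∧ (p : ℤ) ^ (K + 1) ∣ f v}
      = p ^ (Fintype.card ι - 1) *
        #{v ∈ cube (p ^ K) | ¬ DvdEach p (g v) ∧ (p : ℤ) ^ K ∣ f v} := by
  rw [show (p : ℤ) ^ (K + 1) = ((p ^ K : ℕ) : ℤ) * p by push_cast; ring, pow_succ p K,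
    card_filter_cube_mul _ _ (pow_pos hp.pos K), card_filter, mul_sum, ← Nat.cast_pow]
  set q : ℤ := ((p ^ K : ℕ) : ℤ)
  have hpq : q = p * (p : ℤ) ^ (K - 1) := by
    rw [← pow_succ', Nat.sub_add_cancel hK]; push_cast [q]; rfl
  have sing_shift (v w : ι → ℤ) : DvdEach p (g (v + q • w)) ↔ DvdEach p (g v) := by
    refine forall_congr' fun i => ?_
    have h := hg v ((p : ℤ) ^ (K - 1) • w) i
    rw [hpq, mul_smul]
    exact ⟨fun h' => by simpa using dvd_sub h' h, fun h' => by simpa using dvd_add h h'⟩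
  refine sum_congr rfl fun v _ => ?_
  simp only [sing_shift]
  by_cases hs : DvdEach p (g v)
  · simp [hs]
  by_cases hfv : q ∣ f v
  · obtain ⟨d, hd⟩ := hfv
    have lift (w : ι → ℤ) : q * p ∣ f (v + q • w) ↔ (p : ℤ) ∣ g v ⬝ᵥ w - -d := by
      obtain ⟨E, hE⟩ := hf q v w
      have hq0 : q ≠ 0 := by simp [q, hp.ne_zero]
      rw [hE, hd, show q * d + q * (g v ⬝ᵥ w) + q ^ 2 * E = q * (g v ⬝ᵥ w - -d + q * E) by ring,
        mul_dvd_mul_iff_left hq0, dvd_add_left (Dvd.dvd.mul_right (hpq ▸ dvd_mul_right _ _) _)]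
    rw [if_pos ⟨hs, d, hd⟩, mul_one]
    simp only [hs, not_false_eq_true, true_and, lift]
    exact card_filter_cube_dvd_dotProduct_sub hp hs _
  · have none (w : ι → ℤ) : ¬ q * p ∣ f (v + q • w) := fun h =>
      hfv ((hf.dvd_add_smul_iff dvd_rfl v w).1 (dvd_of_mul_right_dvd h))
    rw [filter_false_of_mem fun w _ h => none w h.2, if_neg fun h => hfv h.2]
    simp

theorem IsIntGradient.numSol_succ (hp : p.Prime) (hf : IsIntGradient g f)
    (hg : ∀ v w i, (p : ℤ) ∣ g (v + (p : ℤ) • w) i - g v i) {K : ℕ} (hK : 1 ≤ K)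
    (hsing : numSolWhere p (K + 1) (fun v => DvdEach p (g v)) f =
      p ^ (Fintype.card ι - 1) * numSolWhere p K (fun v => DvdEach p (g v)) f) :
    numSol p (K + 1) f = p ^ (Fintype.card ι - 1) * numSol p K f := by
  have split (n : ℕ) : numSol p n f = numSolWhere p n (fun v => DvdEach p (g v)) f +
      #{v ∈ cube (p ^ n) | ¬ DvdEach p (g v) ∧ (p : ℤ) ^ n ∣ f v} := by
    rw [numSol, numSolWhere, ← card_filter_add_card_filter_not (fun v => DvdEach p (g v)),
      filter_filter, filter_filter]
    simp only [and_comm]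
  rw [split, split, hsing, hf.card_nonsingular_succ hp hg hK, mul_add]

end Hensel

section MarkoffForm

/-- `markoffForm 0 1 a` is `M - a`; the other members of the family arise in the charts at its
singular points. -/
def markoffForm (e k b : ℤ) (v : Fin 3 → ℤ) : ℤ :=
  v 0 ^ 2 + v 1 ^ 2 + v 2 ^ 2 + e * (v 0 * v 1 + v 1 * v 2 + v 2 * v 0) - k * (v 0 * v 1 * v 2) - b

def markoffGrad (e k : ℤ) (v : Fin 3 → ℤ) : Fin 3 → ℤ :=
  ![2 * v 0 + e * (v 1 + v 2) - k * (v 1 * v 2),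
    2 * v 1 + e * (v 2 + v 0) - k * (v 2 * v 0),
    2 * v 2 + e * (v 0 + v 1) - k * (v 0 * v 1)]

lemma markoffForm_isIntGradient (e k b : ℤ) :
    IsIntGradient (markoffGrad e k) (markoffForm e k b) := fun P v w =>
  ⟨markoffForm e k 0 w - k * (w 0 * w 1 * v 2 + w 0 * v 1 * w 2 + v 0 * w 1 * w 2)
      - (P - 1) * k * (w 0 * w 1 * w 2), by
    simp only [markoffForm, markoffGrad, dotProduct, Fin.sum_univ_three, Pi.add_apply,
      Pi.smul_apply, smul_eq_mul, Matrix.cons_val_zero, Matrix.cons_val_one, Matrix.cons_val]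
    ring⟩

lemma markoffGrad_add_smul_sub (e k P : ℤ) (v w : Fin 3 → ℤ) (i : Fin 3) :
    P ∣ markoffGrad e k (v + P • w) i - markoffGrad e k v i := by
  have h (j : Fin 3) : v j ≡ v j + P * w j [ZMOD P] := by simp [Int.ModEq]
  rw [← Int.modEq_iff_dvd]
  fin_cases i <;>
    simp only [markoffGrad, Fin.isValue, Fin.zero_eta, Fin.mk_one, Fin.reduceFinMk,
      Matrix.cons_val_zero, Matrix.cons_val_one, Matrix.cons_val, Pi.add_apply, Pi.smul_apply,
      smul_eq_mul] <;>
    gcongr <;> apply h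

lemma markoffForm_smul (e k b m : ℤ) (V : Fin 3 → ℤ) :
    markoffForm e k (m ^ 2 * b) (m • V) = m ^ 2 * markoffForm e (m * k) b V := by
  simp only [markoffForm, Pi.smul_apply, smul_eq_mul]
  ring

lemma dvdEach_markoffGrad_of_dvdEach_sub {P e k : ℤ} {v c : Fin 3 → ℤ} (h : DvdEach P (v - c))
    (hc : markoffGrad e k c = 0) : DvdEach P (markoffGrad e k v) := by
  choose w hw using h
  have hv : v = c + P • w := by ext i; simp [← hw]
  intro i
  simpa [hv, hc] using markoffGrad_add_smul_sub e k P c w i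

def markoffSigns : Finset (Fin 3 → ℤ) := {![1, 1, 1], ![1, -1, -1], ![-1, 1, -1], ![-1, -1, 1]}

lemma eq_one_or_neg_one_of_mem_markoffSigns {ε : Fin 3 → ℤ} (hε : ε ∈ markoffSigns) (i : Fin 3) :
    ε i = 1 ∨ ε i = -1 := by
  simp only [markoffSigns, mem_insert, mem_singleton] at hε
  rcases hε with rfl | rfl | rfl | rfl <;> fin_cases i <;> simp

lemma markoffForm_sign_shift {ε : Fin 3 → ℤ} (hε : ε ∈ markoffSigns) (a : ℤ) (V : Fin 3 → ℤ) :
    markoffForm 0 1 a (ε * V + 2 * ε) = markoffForm (-2) 1 (a - 4) V := by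
  simp only [markoffSigns, mem_insert, mem_singleton] at hε
  rcases hε with rfl | rfl | rfl | rfl <;>
  · simp only [markoffForm, Pi.add_apply, Pi.mul_apply, Pi.ofNat_apply, Matrix.cons_val_zero,
      Matrix.cons_val_one, Matrix.cons_val]
    ring

lemma markoffGrad_two_mul_sign {ε : Fin 3 → ℤ} (hε : ε ∈ markoffSigns) :
    markoffGrad 0 1 (2 * ε) = 0 := by
  simp only [markoffSigns, mem_insert, mem_singleton] at hε
  ext i
  rcases hε with rfl | rfl | rfl | rfl <;> fin_cases i <;> simp [markoffGrad]

end MarkoffForm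

section Singular

lemma markoff_critical_points {F : Type*} [Field F] (h2 : (2 : F) ≠ 0) {v : Fin 3 → F} {a : F}
    (hx : 2 * v 0 = v 1 * v 2) (hy : 2 * v 1 = v 2 * v 0) (hz : 2 * v 2 = v 0 * v 1)
    (ha : v 0 ^ 2 + v 1 ^ 2 + v 2 ^ 2 - v 0 * v 1 * v 2 = a) :
    (a = 0 ∧ v = 0) ∨ (a = 4 ∧ ∃ ε ∈ markoffSigns, v = fun i => 2 * (ε i : F)) := by
  have cancel {t : F} (h : 2 * t = 0) : t = 0 := (mul_eq_zero.1 h).resolve_left h2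
  by_cases h0 : v 0 = 0
  · have h1 : v 1 = 0 := cancel (by rw [hy, h0, mul_zero])
    have h2' : v 2 = 0 := cancel (by rw [hz, h0, zero_mul])
    refine Or.inl ⟨by rw [← ha, h0, h1, h2']; ring, funext fun i => ?_⟩
    fin_cases i <;> assumption
  have h1 : v 1 ≠ 0 := fun h => h0 (cancel (by rw [hx, h, zero_mul]))
  have h2' : v 2 ≠ 0 := fun h => h0 (cancel (by rw [hx, h, mul_zero]))
  have sq0 : v 0 ^ 2 = 4 := by
    have : (v 0 ^ 2 - 4) * (v 1 * v 2) = 0 := by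
      linear_combination (-2 * v 2) * hy - (v 2 * v 0) * hz
    linear_combination (mul_eq_zero.1 this).resolve_right (mul_ne_zero h1 h2')
  have sq1 : v 1 ^ 2 = 4 := by
    have : (v 1 ^ 2 - 4) * (v 2 * v 0) = 0 := by
      linear_combination (-2 * v 0) * hz - (v 0 * v 1) * hx
    linear_combination (mul_eq_zero.1 this).resolve_right (mul_ne_zero h2' h0)
  have e2 : v 2 = v 0 * v 1 / 2 := by field_simp; linear_combination hz
  have finish (ε : Fin 3 → ℤ) (hε : ε ∈ markoffSigns) (hv : ∀ i, v i = 2 * (ε i : F)) :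
      a = 4 ∧ ∃ ε ∈ markoffSigns, v = fun i => 2 * (ε i : F) := by
    refine ⟨?_, ε, hε, funext hv⟩
    rw [← ha, hv 0, hv 1, hv 2]
    simp only [markoffSigns, mem_insert, mem_singleton] at hε
    rcases hε with rfl | rfl | rfl | rfl <;> simp <;> norm_num
  refine Or.inr ?_
  have two : (2 : F) * 2 / 2 = 2 := mul_div_cancel_left₀ _ h2
  rcases sq_eq_sq_iff_eq_or_eq_neg.1 (sq0.trans (by norm_num : (4 : F) = 2 ^ 2)) with e0 | e0 <;>
    rcases sq_eq_sq_iff_eq_or_eq_neg.1 (sq1.trans (by norm_num : (4 : F) = 2 ^ 2)) with e1 | e1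
  · refine finish ![1, 1, 1] (by simp [markoffSigns]) fun i => ?_
    fin_cases i <;> simp [e0, e1, e2, two]
  · refine finish ![1, -1, -1] (by simp [markoffSigns]) fun i => ?_
    fin_cases i <;> simp [e0, e1, e2, neg_div, two]
  · refine finish ![-1, 1, -1] (by simp [markoffSigns]) fun i => ?_
    fin_cases i <;> simp [e0, e1, e2, neg_div, two]
  · refine finish ![-1, -1, 1] (by simp [markoffSigns]) fun i => ?_
    fin_cases i <;> simp [e0, e1, e2, two]

lemma Nat.Prime.intCast_not_dvd_four {p : ℕ} (hp : p.Prime) (hodd : p ≠ 2) : ¬ (p : ℤ) ∣ 4 := by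
  intro h
  have : p ∣ 2 ^ 2 := by exact_mod_cast h
  exact hodd ((Nat.prime_dvd_prime_iff_eq hp Nat.prime_two).1 (hp.dvd_of_dvd_pow this))

variable {p : ℕ}

lemma dvdEach_markoffGrad_iff (hp : p.Prime) (hodd : p ≠ 2) {e k : ℤ} (he : e = 0 ∨ e = -2)
    (hk : (p : ℤ) ∣ k) (v : Fin 3 → ℤ) : DvdEach p (markoffGrad e k v) ↔ DvdEach p v := by
  have := Fact.mk hp
  have h2 : (2 : ZMod p) ≠ 0 := Ring.two_ne_zero (by rwa [ZMod.ringChar_zmod_n])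
  have cancel {t : ZMod p} (h : 2 * t = 0) : t = 0 := (mul_eq_zero.1 h).resolve_left h2
  rw [← ZMod.intCast_zmod_eq_zero_iff_dvd] at hk
  simp only [DvdEach, Fin.forall_fin_succ, IsEmpty.forall_iff, and_true, markoffGrad,
    Fin.succ_zero_eq_one, Fin.succ_one_eq_two, Matrix.cons_val_zero, Matrix.cons_val_one,
    Matrix.cons_val, ← ZMod.intCast_zmod_eq_zero_iff_dvd]
  push_cast [hk, zero_mul, sub_zero]
  rcases he with rfl | rfl
  · simp [h2]
  · push_cast
    constructor
    · rintro ⟨hx, hy, hz⟩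
      refine ⟨cancel (cancel ?_), cancel (cancel ?_), cancel (cancel ?_)⟩
      · linear_combination -hy - hz
      · linear_combination -hx - hz
      · linear_combination -hx - hy
    · rintro ⟨hx, hy, hz⟩
      simp [hx, hy, hz]

lemma markoff_singular_mod_prime (hp : p.Prime) (hodd : p ≠ 2) {a : ℤ} {v : Fin 3 → ℤ}
    (hs : DvdEach p (markoffGrad 0 1 v)) (hf : (p : ℤ) ∣ markoffForm 0 1 a v) :
    ((p : ℤ) ∣ a ∧ DvdEach p v) ∨
      ((p : ℤ) ∣ a - 4 ∧ ∃ ε ∈ markoffSigns, DvdEach p (v - 2 * ε)) := by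
  have := Fact.mk hp
  have h2 : (2 : ZMod p) ≠ 0 := Ring.two_ne_zero (by rwa [ZMod.ringChar_zmod_n])
  simp only [DvdEach, ← ZMod.intCast_zmod_eq_zero_iff_dvd, Fin.forall_fin_succ, IsEmpty.forall_iff,
    markoffGrad, markoffForm, Pi.sub_apply, Pi.mul_apply, Pi.ofNat_apply] at hs hf ⊢
  push_cast at hs hf ⊢
  obtain ⟨hx, hy, hz, -⟩ := hs
  rcases markoff_critical_points h2 (v := fun i => (v i : ZMod p)) (a := a)
    (by linear_combination hx) (by linear_combination hy) (by linear_combination hz)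
    (by linear_combination hf) with ⟨ha, hv⟩ | ⟨ha, ε, hε, hv⟩
  · simp only [funext_iff] at hv
    exact Or.inl ⟨ha, hv 0, hv 1, hv 2, trivial⟩
  · simp only [funext_iff, ← sub_eq_zero (a := (v _ : ZMod p))] at hv
    exact Or.inr ⟨by rw [ha]; ring, ε, hε, hv 0, hv 1, hv 2, trivial⟩

end Singular

section Chart

variable {p : ℕ}

lemma numSolWhere_dvdEach_markoffForm_eq_zero {j n : ℕ} (hj : j ≤ 2) (hjn : j ≤ n) {e k b : ℤ}
    (hb : ¬ (p : ℤ) ^ j ∣ b) :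
    numSolWhere p n (DvdEach p) (markoffForm e k b) = 0 := by
  refine card_eq_zero.2 (filter_eq_empty_iff.2 fun v _ ⟨hv, hf⟩ => hb ?_)
  choose V hV using hv
  have hvV : v = (p : ℤ) • V := funext hV
  have hF : markoffForm e k b v = (p : ℤ) ^ 2 * markoffForm e (p * k) 0 V - b := by
    rw [hvV, ← markoffForm_smul e k 0 _ V]
    simp [markoffForm]
  have hj2 : (p : ℤ) ^ j ∣ (p : ℤ) ^ 2 * markoffForm e (p * k) 0 V :=
    (pow_dvd_pow _ hj).mul_right _
  rw [hF] at hf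
  simpa using dvd_sub hj2 ((pow_dvd_pow _ hjn).trans hf)

lemma numSolWhere_dvdEach_markoffForm_sq_mul (hp : 0 < p) {n : ℕ} (hn : 2 ≤ n) (e k b : ℤ) :
    numSolWhere p n (DvdEach p) (markoffForm e k ((p : ℤ) ^ 2 * b))
      = p ^ 3 * numSol p (n - 2) (markoffForm e (p * k) b) := by
  have hpow : (p : ℤ) ^ n = (p : ℤ) ^ 2 * (p : ℤ) ^ (n - 2) := by
    rw [← pow_add, Nat.add_sub_cancel' hn]
  have h := (markoffForm_isIntGradient e (p * k) b).card_filter_cube_pow_succ hp (n - 2)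
  rw [Fintype.card_fin] at h
  rw [numSolWhere, show p ^ n = p * p ^ (n - 2 + 1) by rw [← pow_succ']; congr 1; omega,
    card_filter_cube_dvd_and _ _ hp, ← h]
  congr! 2 with V
  rw [markoffForm_smul, hpow, mul_dvd_mul_iff_left (by positivity)]

lemma numSolWhere_dvdEach_markoffForm_succ (hp : 0 < p) {K : ℕ} (hK : 1 ≤ K) {e k b : ℤ}
    (hb : ¬ (p : ℤ) ^ K ∣ b)
    (ih : ∀ m < K, 1 ≤ m → ∀ b', ¬ (p : ℤ) ^ m ∣ b' →
      numSol p (m + 1) (markoffForm e (p * k) b') = p ^ 2 * numSol p m (markoffForm e (p * k) b')) :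
    numSolWhere p (K + 1) (DvdEach p) (markoffForm e k b) =
      p ^ 2 * numSolWhere p K (DvdEach p) (markoffForm e k b) := by
  by_cases h1 : (p : ℤ) ^ 1 ∣ b
  swap
  · rw [numSolWhere_dvdEach_markoffForm_eq_zero (by norm_num) (by omega) h1,
      numSolWhere_dvdEach_markoffForm_eq_zero (by norm_num) hK h1, mul_zero]
  by_cases h2 : (p : ℤ) ^ 2 ∣ b
  swap
  · have hK2 : 2 ≤ K := by
      by_contra
      exact hb (by rwa [show K = 1 by omega])
    rw [numSolWhere_dvdEach_markoffForm_eq_zero le_rfl (by omega) h2,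
      numSolWhere_dvdEach_markoffForm_eq_zero le_rfl hK2 h2, mul_zero]
  obtain ⟨b', rfl⟩ := h2
  have hK3 : 3 ≤ K := by
    by_contra
    exact hb ((pow_dvd_pow _ (by omega)).trans (dvd_mul_right _ _))
  have hb' : ¬ (p : ℤ) ^ (K - 2) ∣ b' := fun h =>
    hb (by rw [show K = 2 + (K - 2) by omega, pow_add]; exact mul_dvd_mul_left _ h)
  rw [numSolWhere_dvdEach_markoffForm_sq_mul hp (by omega),
    numSolWhere_dvdEach_markoffForm_sq_mul hp (by omega), show K + 1 - 2 = K - 2 + 1 by omega,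
    ih (K - 2) (by omega) (by omega) b' hb']
  ring

theorem numSol_markoffForm_succ (hp : p.Prime) (hodd : p ≠ 2) {e : ℤ} (he : e = 0 ∨ e = -2)
    {K : ℕ} (hK : 1 ≤ K) {k b : ℤ} (hk : (p : ℤ) ∣ k) (hb : ¬ (p : ℤ) ^ K ∣ b) :
    numSol p (K + 1) (markoffForm e k b) = p ^ 2 * numSol p K (markoffForm e k b) := by
  induction K using Nat.strong_induction_on generalizing k b with
  | _ K ih =>
  have sing (n : ℕ) : numSolWhere p n (fun v => DvdEach p (markoffGrad e k v)) (markoffForm e k b)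
      = numSolWhere p n (DvdEach p) (markoffForm e k b) :=
    numSolWhere_congr fun v _ => dvdEach_markoffGrad_iff hp hodd he hk v
  refine (markoffForm_isIntGradient e k b).numSol_succ hp (markoffGrad_add_smul_sub e k p) hK ?_
  rw [sing, sing]
  exact numSolWhere_dvdEach_markoffForm_succ hp.pos hK hb fun m hm hm1 b' hb' =>
    ih m hm hm1 (dvd_mul_right _ _) hb'

end Chart

section Markoff

variable {p : ℕ}

lemma numSolWhere_near_two_mul_sign (hp : 0 < p) {ε : Fin 3 → ℤ} (hε : ε ∈ markoffSigns) {n : ℕ}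
    (hn : 1 ≤ n) (a : ℤ) :
    numSolWhere p n (fun v => DvdEach p (v - 2 * ε)) (markoffForm 0 1 a) =
      numSolWhere p n (DvdEach p) (markoffForm (-2) 1 (a - 4)) := by
  have hsq (i : Fin 3) : ε i * ε i = 1 := by
    rcases eq_one_or_neg_one_of_mem_markoffSigns hε i with h | h <;> simp [h]
  rw [numSolWhere, numSolWhere, ← card_filter_cube_comp_affine _ (pow_pos hp n) _ ?_ ε (2 * ε) hsq]
  · congr! 2 with V
    rw [markoffForm_sign_shift hε, add_sub_cancel_right]
    refine and_congr (forall_congr' fun i => ?_) Iff.rfl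
    rcases eq_one_or_neg_one_of_mem_markoffSigns hε i with h | h <;> simp [h]
  · intro v w
    refine and_congr (forall_congr' fun i => ?_) ?_
    · simp only [Pi.sub_apply, Pi.add_apply, Pi.smul_apply, smul_eq_mul, add_sub_right_comm]
      have hpn : (p : ℤ) ∣ (p ^ n : ℕ) := by push_cast; exact dvd_pow_self _ (by omega)
      exact dvd_add_left (hpn.mul_right _)
    · exact_mod_cast (markoffForm_isIntGradient 0 1 a).dvd_add_smul_iff dvd_rfl v w

lemma numSolWhere_markoff_singular_of_dvd_sub_four (hp : p.Prime) (hodd : p ≠ 2) {a : ℤ}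
    (ha : (p : ℤ) ∣ a - 4) {n : ℕ} (hn : 1 ≤ n) :
    numSolWhere p n (fun v => DvdEach p (markoffGrad 0 1 v)) (markoffForm 0 1 a) =
      4 * numSolWhere p n (DvdEach p) (markoffForm (-2) 1 (a - 4)) := by
  have hp4 := hp.intCast_not_dvd_four hodd
  have near_signs : numSolWhere p n (fun v => DvdEach p (markoffGrad 0 1 v)) (markoffForm 0 1 a) =
      numSolWhere p n (fun v => ∃ ε ∈ markoffSigns, DvdEach p (v - 2 * ε)) (markoffForm 0 1 a) := by
    refine numSolWhere_congr fun v hv => ⟨fun hs => ?_, fun ⟨ε, hε, h⟩ =>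
      dvdEach_markoffGrad_of_dvdEach_sub h (markoffGrad_two_mul_sign hε)⟩
    refine ((markoff_singular_mod_prime hp hodd hs ((dvd_pow_self _ (by omega)).trans hv)
      ).resolve_left fun h => hp4 ?_).2
    simpa using dvd_sub h.1 ha
  have disjoint (ε) (hε : ε ∈ markoffSigns) (ε') (hε' : ε' ∈ markoffSigns) (v : Fin 3 → ℤ)
      (h : DvdEach p (v - 2 * ε)) (h' : DvdEach p (v - 2 * ε')) : ε = ε' := by
    ext i
    have hd : (p : ℤ) ∣ 2 * (ε' i - ε i) := by
      have := dvd_sub (h i) (h' i)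
      simp only [Pi.sub_apply, Pi.mul_apply, Pi.ofNat_apply] at this
      rwa [show v i - 2 * ε i - (v i - 2 * ε' i) = 2 * (ε' i - ε i) by ring] at this
    rcases eq_one_or_neg_one_of_mem_markoffSigns hε i with e | e <;>
    rcases eq_one_or_neg_one_of_mem_markoffSigns hε' i with e' | e' <;>
    simp [e, e'] at hd ⊢ <;> exact hp4 (by simpa using hd)
  rw [near_signs, numSolWhere_exists_mem_eq_sum _ _ disjoint, sum_congr rfl fun ε hε =>
    numSolWhere_near_two_mul_sign hp.pos hε hn a]
  simp [markoffSigns]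

lemma numSolWhere_markoff_singular_of_dvd (hp : p.Prime) (hodd : p ≠ 2) {a : ℤ}
    (ha : (p : ℤ) ∣ a) {n : ℕ} (hn : 1 ≤ n) :
    numSolWhere p n (fun v => DvdEach p (markoffGrad 0 1 v)) (markoffForm 0 1 a) =
      numSolWhere p n (DvdEach p) (markoffForm 0 1 a) := by
  refine numSolWhere_congr fun v hv => ⟨fun hs => ?_, fun h =>
    dvdEach_markoffGrad_of_dvdEach_sub (c := 0) (by simpa using h)
      (by ext i; fin_cases i <;> simp [markoffGrad])⟩
  refine ((markoff_singular_mod_prime hp hodd hs ((dvd_pow_self _ (by omega)).trans hv)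
    ).resolve_right fun h => hp.intCast_not_dvd_four hodd ?_).2
  simpa using dvd_sub ha h.1

lemma numSolWhere_markoff_singular_eq_zero (hp : p.Prime) (hodd : p ≠ 2) {a : ℤ}
    (ha : ¬ (p : ℤ) ∣ a) (ha' : ¬ (p : ℤ) ∣ a - 4) {n : ℕ} (hn : 1 ≤ n) :
    numSolWhere p n (fun v => DvdEach p (markoffGrad 0 1 v)) (markoffForm 0 1 a) = 0 := by
  refine card_eq_zero.2 (filter_eq_empty_iff.2 fun v _ ⟨hs, hf⟩ => ?_)
  rcases markoff_singular_mod_prime hp hodd hs ((dvd_pow_self _ (by omega)).trans hf) with h | h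
  exacts [ha h.1, ha' h.1]

theorem numSol_markoff_succ (hp : p.Prime) (hodd : p ≠ 2) {K : ℕ} (hK : 1 ≤ K) {a : ℤ}
    (ha : ¬ (p : ℤ) ^ K ∣ a * (a - 4)) :
    numSol p (K + 1) (markoffForm 0 1 a) = p ^ 2 * numSol p K (markoffForm 0 1 a) := by
  refine (markoffForm_isIntGradient 0 1 a).numSol_succ hp (markoffGrad_add_smul_sub 0 1 p) hK ?_
  have ih {e : ℤ} (he : e = 0 ∨ e = -2) (m : ℕ) (_ : m < K) (hm : 1 ≤ m) (b : ℤ)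
      (hb : ¬ (p : ℤ) ^ m ∣ b) :
      numSol p (m + 1) (markoffForm e (p * 1) b) = p ^ 2 * numSol p m (markoffForm e (p * 1) b) :=
    numSol_markoffForm_succ hp hodd he hm (dvd_mul_right _ _) hb
  by_cases hA : (p : ℤ) ∣ a
  · rw [numSolWhere_markoff_singular_of_dvd hp hodd hA (by omega),
      numSolWhere_markoff_singular_of_dvd hp hodd hA hK]
    exact numSolWhere_dvdEach_markoffForm_succ hp.pos hK (fun h => ha (h.mul_right _))
      (ih (Or.inl rfl))
  by_cases hB : (p : ℤ) ∣ a - 4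
  · rw [numSolWhere_markoff_singular_of_dvd_sub_four hp hodd hB (by omega),
      numSolWhere_markoff_singular_of_dvd_sub_four hp hodd hB hK,
      numSolWhere_dvdEach_markoffForm_succ hp.pos hK (fun h => ha (h.mul_left _)) (ih (Or.inr rfl)),
      Fintype.card_fin]
    ring
  rw [numSolWhere_markoff_singular_eq_zero hp hodd hA hB (by omega),
    numSolWhere_markoff_singular_eq_zero hp hodd hA hB hK, mul_zero]

end Markoff

section ExpSum

open Complex

lemma eC_eq_zpow (m : ℕ) (t : ℤ) : eC m t = exp (2 * Real.pi * I / m) ^ t := by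
  rw [eC, ← exp_int_mul]
  ring_nf

lemma sum_Icc_eC_mul {m : ℕ} (hm : 0 < m) (t : ℤ) :
    ∑ u ∈ Icc 1 m, eC m (u * t) = if (m : ℤ) ∣ t then (m : ℂ) else 0 := by
  have hω := isPrimitiveRoot_exp m hm.ne'
  have hterm (u : ℕ) : eC m (u * t) = (exp (2 * Real.pi * I / m) ^ t) ^ u := by
    rw [eC_eq_zpow, ← zpow_natCast, ← zpow_mul, mul_comm t]
  simp only [hterm]
  split_ifs with h
  · simp [(hω.zpow_eq_one_iff_dvd t).2 h]
  · have hζ : exp (2 * Real.pi * I / m) ^ t ≠ 1 := by rwa [Ne, hω.zpow_eq_one_iff_dvd]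
    have hζm : (exp (2 * Real.pi * I / m) ^ t) ^ m = 1 := by
      rw [← zpow_natCast, ← zpow_mul, mul_comm t, zpow_mul, zpow_natCast, hω.pow_eq_one, one_zpow]
    rw [← Ico_add_one_right_eq_Icc, sum_Ico_eq_sum_range, Nat.add_sub_cancel]
    simp only [pow_add, pow_one, ← mul_sum, geom_sum_eq hζ, hζm, sub_self, zero_div, mul_zero]

lemma sum_coprime_eC_prime_pow {p : ℕ} (hp : p.Prime) {ℓ : ℕ} (hℓ : 1 ≤ ℓ) (t : ℤ) :
    ∑ u ∈ Icc 1 (p ^ ℓ) with u.Coprime (p ^ ℓ), eC (p ^ ℓ) (u * t) =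
      (if (p : ℤ) ^ ℓ ∣ t then (p : ℂ) ^ ℓ else 0) -
        if (p : ℤ) ^ (ℓ - 1) ∣ t then (p : ℂ) ^ (ℓ - 1) else 0 := by
  have hpow : p ^ ℓ = p * p ^ (ℓ - 1) := by rw [← pow_succ', Nat.sub_add_cancel hℓ]
  have non_coprime : {u ∈ Icc 1 (p ^ ℓ) | ¬ u.Coprime (p ^ ℓ)} =
      (Icc 1 (p ^ (ℓ - 1))).map ⟨(p * ·), mul_right_injective₀ hp.ne_zero⟩ := by
    ext u
    simp only [mem_filter, mem_Icc, mem_map, Function.Embedding.coeFn_mk,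
      Nat.coprime_pow_right_iff hℓ, Nat.coprime_comm, hp.coprime_iff_not_dvd, not_not]
    constructor
    · rintro ⟨⟨h1, h2⟩, v, rfl⟩
      refine ⟨v, ⟨Nat.pos_of_ne_zero fun h => by simp [h] at h1, ?_⟩, rfl⟩
      rw [hpow] at h2
      exact Nat.le_of_mul_le_mul_left h2 hp.pos
    · rintro ⟨v, ⟨h1, h2⟩, rfl⟩
      exact ⟨⟨Nat.mul_pos hp.pos h1, hpow ▸ Nat.mul_le_mul_left p h2⟩, v, rfl⟩
  have multiple (v : ℕ) : eC (p ^ ℓ) ((p * v : ℕ) * t) = eC (p ^ (ℓ - 1)) (v * t) := by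
    have : (p : ℂ) ≠ 0 := by exact_mod_cast hp.ne_zero
    rw [eC, eC, hpow]
    push_cast
    field_simp
  rw [eq_sub_of_add_eq (sum_filter_add_sum_filter_not (Icc 1 (p ^ ℓ)) (·.Coprime (p ^ ℓ))
    fun u : ℕ => eC (p ^ ℓ) (u * t)), non_coprime, sum_map]
  simp only [Function.Embedding.coeFn_mk, multiple]
  rw [sum_Icc_eC_mul (pow_pos hp.pos _), sum_Icc_eC_mul (pow_pos hp.pos _)]
  push_cast
  rfl

end ExpSum

lemma sum_triple_eq_sum_piFinset {M : Type*} [AddCommMonoid M] (I : Finset ℤ)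
    (F : (Fin 3 → ℤ) → M) :
    ∑ x ∈ I, ∑ y ∈ I, ∑ z ∈ I, F ![x, y, z] = ∑ v ∈ Fintype.piFinset fun _ => I, F v := by
  simp_rw [← sum_product']
  refine sum_nbij' (fun w => ![w.1, w.2.1, w.2.2]) (fun v => (v 0, v 1, v 2)) ?_ ?_ ?_ ?_ ?_
  · intro w hw
    simp only [mem_product] at hw
    simp [Fin.forall_fin_succ, hw]
  · intro v hv
    simp only [Fintype.mem_piFinset] at hv
    simp [hv]
  · intro w _
    rfl
  · intro v _
    ext i
    fin_cases i <;> rfl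
  · intro w _
    rfl

lemma T_prime_pow_eq {p : ℕ} (hp : p.Prime) {ℓ : ℕ} (hℓ : 1 ≤ ℓ) (a : ℤ) :
    T a (p ^ ℓ) = (p : ℂ) ^ ℓ * numSol p ℓ (markoffForm 0 1 a) -
      (p : ℂ) ^ (ℓ + 2) * numSol p (ℓ - 1) (markoffForm 0 1 a) := by
  have hf := markoffForm_isIntGradient 0 1 a
  have hMk (x y z : ℤ) : Mk x y z - a = markoffForm 0 1 a ![x, y, z] := by
    simp [Mk, markoffForm]
  have periodic {n : ℕ} (hn : n ≤ ℓ) (v w : Fin 3 → ℤ) :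
      (p : ℤ) ^ n ∣ markoffForm 0 1 a (v + ((p ^ ℓ : ℕ) : ℤ) • w) ↔
        (p : ℤ) ^ n ∣ markoffForm 0 1 a v :=
    hf.dvd_add_smul_iff (by push_cast; exact pow_dvd_pow _ hn) v w
  have hq : 0 < p ^ ℓ := pow_pos hp.pos ℓ
  have swap : T a (p ^ ℓ) = ∑ x ∈ Icc (1 : ℤ) (p ^ ℓ : ℕ), ∑ y ∈ Icc (1 : ℤ) (p ^ ℓ : ℕ),
      ∑ z ∈ Icc (1 : ℤ) (p ^ ℓ : ℕ), ∑ u ∈ Icc 1 (p ^ ℓ) with u.Coprime (p ^ ℓ),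
        eC (p ^ ℓ) (u * (Mk x y z - a)) := by
    rw [T, sum_comm]
    refine sum_congr rfl fun x _ => ?_
    rw [sum_comm]
    exact sum_congr rfl fun y _ => sum_comm
  simp only [swap, sum_coprime_eC_prime_pow hp hℓ, hMk]
  rw [sum_triple_eq_sum_piFinset (F := fun v =>
      (if (p : ℤ) ^ ℓ ∣ markoffForm 0 1 a v then (p : ℂ) ^ ℓ else 0) -
        if (p : ℤ) ^ (ℓ - 1) ∣ markoffForm 0 1 a v then (p : ℂ) ^ (ℓ - 1) else 0),
    sum_sub_distrib, ← sum_filter, ← sum_filter, sum_const, sum_const,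
    card_filter_piFinset_Icc _ hq _ (periodic le_rfl),
    card_filter_piFinset_Icc _ hq _ (periodic (Nat.sub_le ℓ 1))]
  have h := hf.card_filter_cube_pow_succ hp.pos (ℓ - 1)
  rw [Nat.sub_add_cancel hℓ, Fintype.card_fin] at h
  rw [h, ← numSol]
  simp only [nsmul_eq_mul]
  push_cast
  rw [show ℓ + 2 = ℓ - 1 + 3 by omega]
  ring

/-- Let `p` be an odd prime, `ℓ ≥ 2`, `a ∈ ℤ`. If `p^{ℓ-1} ∤ a(a-4)` then `T_a(p^ℓ) = 0`. -/
theorem stmt13 (p : ℕ) (hp : p.Prime) (hodd : p ≠ 2) (ℓ : ℕ) (hℓ : 2 ≤ ℓ) (a : ℤ)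
    (h : ¬ (p : ℤ) ^ (ℓ - 1) ∣ a * (a - 4)) :
    T a (p ^ ℓ) = 0 := by
  obtain ⟨K, rfl⟩ : ∃ K, ℓ = K + 1 := ⟨ℓ - 1, by omega⟩
  rw [Nat.add_sub_cancel] at h
  rw [T_prime_pow_eq hp (by omega), Nat.add_sub_cancel,
    numSol_markoff_succ hp hodd (by omega) h]
  push_cast
  ring
end
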